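/- arXiv:2112.03758 — 8 statements merged into one kernel-verified Lean document; each statement's English description precedes it below -/
import Mathlib

section
/- If H is a positive semidefinite Hermitian matrix partitioned in 2x2 block form with diagonal blocks A and C, then rank H ≤ rank A + rank C. -/
/-!
Factor `H = Nᴴ * N` and split `N = [N₁ N₂]` by columns, so that `A = N₁ᴴ * N₁` and
`C = N₂ᴴ * N₂`. Since `rank (Mᴴ * M) = rank M`, this gives
`rank H = rank N ≤ rank N₁ + rank N₂ = rank A + rank C`.
-/

open Matrix ComplexOrder

namespace Matrix

theorem range_mulVecLin_fromCols {R m n₁ n₂ : Type*} [CommSemiring R] [Fintype n₁] [Fintype n₂]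
    (B₁ : Matrix m n₁ R) (B₂ : Matrix m n₂ R) :
    (fromCols B₁ B₂).mulVecLin.range = B₁.mulVecLin.range ⊔ B₂.mulVecLin.range := by
  have hcol : (fromCols B₁ B₂).col = Sum.elim B₁.col B₂.col := by
    ext (j | j) i <;> rfl
  rw [range_mulVecLin, range_mulVecLin, range_mulVecLin, hcol, Set.Sum.elim_range,
    Submodule.span_union]

theorem rank_fromCols_le {K m n₁ n₂ : Type*} [Field K] [Fintype n₁] [Fintype n₂]
    (B₁ : Matrix m n₁ K) (B₂ : Matrix m n₂ K) :
    (fromCols B₁ B₂).rank ≤ B₁.rank + B₂.rank := by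
  rw [rank, range_mulVecLin_fromCols]
  exact Submodule.finrank_add_le_finrank_add_finrank _ _

theorem conjTranspose_fromCols_mul_fromCols {R m n₁ n₂ : Type*} [Fintype m] [Semiring R] [Star R]
    (N₁ : Matrix m n₁ R) (N₂ : Matrix m n₂ R) :
    (fromCols N₁ N₂)ᴴ * fromCols N₁ N₂ =
      fromBlocks (N₁ᴴ * N₁) (N₁ᴴ * N₂) (N₂ᴴ * N₁) (N₂ᴴ * N₂) := by
  rw [conjTranspose_fromCols_eq_fromRows_conjTranspose, fromRows_mul_fromCols]

theorem PosSemidef.exists_eq_conjTranspose_mul_self {𝕜 n : Type*} [RCLike 𝕜] [Fintype n]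
    {H : Matrix n n 𝕜} (hH : H.PosSemidef) : ∃ N : Matrix n n 𝕜, H = Nᴴ * N := by
  classical
  open MatrixOrder in exact CStarAlgebra.nonneg_iff_eq_star_mul_self.mp hH.nonneg

end Matrix

theorem rank_le_rank_add_rank {k l : ℕ}
    (A : Matrix (Fin k) (Fin k) ℂ) (B : Matrix (Fin k) (Fin l) ℂ)
    (C : Matrix (Fin l) (Fin l) ℂ)
    (hH : (Matrix.fromBlocks A B Bᴴ C).PosSemidef) :
    (Matrix.fromBlocks A B Bᴴ C).rank ≤ A.rank + C.rank := by
  obtain ⟨N, hN⟩ := hH.exists_eq_conjTranspose_mul_self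
  obtain ⟨N₁, N₂, rfl⟩ : ∃ N₁ N₂, N = fromCols N₁ N₂ := ⟨_, _, (fromCols_toCols N).symm⟩
  obtain ⟨rfl, -, -, rfl⟩ :=
    fromBlocks_inj.mp (hN.trans (conjTranspose_fromCols_mul_fromCols N₁ N₂))
  rw [hN, rank_conjTranspose_mul_self, rank_conjTranspose_mul_self, rank_conjTranspose_mul_self]
  exact rank_fromCols_le N₁ N₂
end

section
/- For a Hermitian matrix H partitioned in 2x2 block form with diagonal blocks A and C, rank H = rank A + rank C if and only if N(H) = N(A) ⊕ N(C) (blockwise embedded), given that H is positive semidefinite. -/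
open Matrix ComplexOrder

lemma finrank_submodule_prod {R M N : Type*} [DivisionRing R] [AddCommGroup M] [AddCommGroup N]
    [Module R M] [Module R N] [FiniteDimensional R M] [FiniteDimensional R N]
    (p : Submodule R M) (q : Submodule R N) :
    Module.finrank R (p.prod q) = Module.finrank R p + Module.finrank R q := by
  have e : (p.prod q) ≃ₗ[R] p × q :=
    { toFun := fun x => (⟨x.1.1, x.2.1⟩, ⟨x.1.2, x.2.2⟩)
      invFun := fun x => ⟨(x.1.1, x.2.1), x.1.2, x.2.2⟩
      map_add' := fun _ _ => rfl
      map_smul' := fun _ _ => rfl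
      left_inv := fun _ => rfl
      right_inv := fun _ => rfl }
  rw [e.finrank_eq, Module.finrank_prod]

theorem rank_eq_iff_nullspace_eq_directSum {k l : ℕ}
    (A : Matrix (Fin k) (Fin k) ℂ) (B : Matrix (Fin k) (Fin l) ℂ)
    (C : Matrix (Fin l) (Fin l) ℂ)
    (hH : (Matrix.fromBlocks A B Bᴴ C).PosSemidef) :
    (Matrix.fromBlocks A B Bᴴ C).rank = A.rank + C.rank ↔
      LinearMap.ker (Matrix.fromBlocks A B Bᴴ C).mulVecLin =
        Submodule.map
          ((LinearEquiv.sumArrowLequivProdArrow (Fin k) (Fin l) ℂ ℂ).symm.toLinearMap)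
          ((LinearMap.ker A.mulVecLin).prod (LinearMap.ker C.mulVecLin)) := by
  classical
  set H := Matrix.fromBlocks A B Bᴴ C with hHdef
  set e := (LinearEquiv.sumArrowLequivProdArrow (Fin k) (Fin l) ℂ ℂ).symm with hedef
  set S := Submodule.map e.toLinearMap
      ((LinearMap.ker A.mulVecLin).prod (LinearMap.ker C.mulVecLin)) with hSdef
  -- if A x = 0, then H (x, 0) = 0
  have hinl : ∀ x : Fin k → ℂ, A *ᵥ x = 0 → H *ᵥ Sum.elim x 0 = 0 := by
    intro x hx
    apply (hH.dotProduct_mulVec_zero_iff _).mp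
    have h1 : H *ᵥ Sum.elim x 0 = Sum.elim (0 : Fin k → ℂ) (Bᴴ *ᵥ x) := by
      rw [hHdef, fromBlocks_mulVec]
      simp [Sum.elim_comp_inl, Sum.elim_comp_inr, hx]
    have hstar : star (Sum.elim x (0 : Fin l → ℂ)) = Sum.elim (star x) (0 : Fin l → ℂ) := by
      ext (i | i) <;> simp [Pi.star_apply]
    rw [h1, hstar, sumElim_dotProduct_sumElim]
    simp
  have hinr : ∀ y : Fin l → ℂ, C *ᵥ y = 0 → H *ᵥ Sum.elim 0 y = 0 := by
    intro y hy
    apply (hH.dotProduct_mulVec_zero_iff _).mp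
    have h1 : H *ᵥ Sum.elim 0 y = Sum.elim (B *ᵥ y) (0 : Fin l → ℂ) := by
      rw [hHdef, fromBlocks_mulVec]
      simp [Sum.elim_comp_inl, Sum.elim_comp_inr, hy]
    have hstar : star (Sum.elim (0 : Fin k → ℂ) y) = Sum.elim (0 : Fin k → ℂ) (star y) := by
      ext (i | i) <;> simp [Pi.star_apply]
    rw [h1, hstar, sumElim_dotProduct_sumElim]
    simp
  -- the inclusion
  have hle : S ≤ LinearMap.ker H.mulVecLin := by
    rintro v hv
    obtain ⟨⟨x, y⟩, ⟨hx, hy⟩, rfl⟩ := hv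
    simp only [SetLike.mem_coe, LinearMap.mem_ker, mulVecLin_apply] at hx hy
    rw [LinearMap.mem_ker, mulVecLin_apply]
    have hxy : (e.toLinearMap (x, y)) = Sum.elim x y := rfl
    rw [hxy]
    have : Sum.elim x y = Sum.elim x (0 : Fin l → ℂ) + Sum.elim (0 : Fin k → ℂ) y := by
      ext (i | i) <;> simp
    rw [this, mulVec_add, hinl x hx, hinr y hy, add_zero]
  -- dimension bookkeeping
  have hdimH : H.rank + Module.finrank ℂ (LinearMap.ker H.mulVecLin) = k + l := by
    have h := LinearMap.finrank_range_add_finrank_ker H.mulVecLin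
    rw [Module.finrank_fintype_fun_eq_card] at h
    simpa [Matrix.rank] using h
  have hdimA : A.rank + Module.finrank ℂ (LinearMap.ker A.mulVecLin) = k := by
    have h := LinearMap.finrank_range_add_finrank_ker A.mulVecLin
    rw [Module.finrank_fintype_fun_eq_card] at h
    simpa [Matrix.rank] using h
  have hdimC : C.rank + Module.finrank ℂ (LinearMap.ker C.mulVecLin) = l := by
    have h := LinearMap.finrank_range_add_finrank_ker C.mulVecLin
    rw [Module.finrank_fintype_fun_eq_card] at h
    simpa [Matrix.rank] using h
  have hdimS : Module.finrank ℂ S = Module.finrank ℂ (LinearMap.ker A.mulVecLin) +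
      Module.finrank ℂ (LinearMap.ker C.mulVecLin) := by
    rw [hSdef, LinearEquiv.finrank_map_eq, finrank_submodule_prod]
  constructor
  · intro hr
    have hfr : Module.finrank ℂ (LinearMap.ker H.mulVecLin) ≤ Module.finrank ℂ S := by omega
    exact (Submodule.eq_of_le_of_finrank_le hle hfr).symm
  · intro hker
    have : Module.finrank ℂ (LinearMap.ker H.mulVecLin) = Module.finrank ℂ S := by rw [hker]
    omega
end

section
/- Generalized Fischer inequality: if H = [[A, B], [B*, C]] is positive semidefinite Hermitian of maximal rank, then det₊ H ≤ det₊ A · det₊ C. -/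
open Matrix ComplexOrder

/-- The generalized determinant: the determinant of `M` restricted to its range. -/
noncomputable def detPlus {n : Type*} [Fintype n] (M : Matrix n n ℂ) : ℂ :=
  LinearMap.det
    (M.mulVecLin.restrict
      (p := LinearMap.range M.mulVecLin) (q := LinearMap.range M.mulVecLin)
      (fun x _ => LinearMap.mem_range_self M.mulVecLin x))

open Finset

theorem detPlus_eq_prod {m : Type*} [Fintype m] [DecidableEq m] {M : Matrix m m ℂ}
    (hM : M.IsHermitian) :
    detPlus M = ∏ i : {i // hM.eigenvalues i ≠ 0}, ((hM.eigenvalues i.1 : ℝ) : ℂ) := by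
  classical
  set v : m → (m → ℂ) := fun i => ⇑(hM.eigenvectorBasis i) with hvdef
  have hmv : ∀ i, M *ᵥ v i = ((hM.eigenvalues i : ℝ) : ℂ) • v i := by
    intro i
    rw [hvdef, hM.mulVec_eigenvectorBasis]
    ext j
    simp [Complex.real_smul]
  have hvind : LinearIndependent ℂ v := by
    have := hM.eigenvectorBasis.toBasis.linearIndependent
    have h2 := this.map' (WithLp.linearEquiv 2 ℂ (m → ℂ)).toLinearMap
      (WithLp.linearEquiv 2 ℂ (m → ℂ)).ker
    convert h2 using 1
    all_goals rfl
  have hmem : ∀ i : {i // hM.eigenvalues i ≠ 0}, v i.1 ∈ LinearMap.range M.mulVecLin := by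
    rintro ⟨i, hi⟩
    refine ⟨((hM.eigenvalues i : ℝ) : ℂ)⁻¹ • v i, ?_⟩
    rw [mulVecLin_apply, mulVec_smul, hmv, smul_smul, inv_mul_cancel₀ (by
      exact_mod_cast Complex.ofReal_ne_zero.mpr hi), one_smul]
  set w : {i // hM.eigenvalues i ≠ 0} → LinearMap.range M.mulVecLin :=
    fun i => ⟨v i.1, hmem i⟩ with hwdef
  have hwind : LinearIndependent ℂ w := by
    apply LinearIndependent.of_comp (LinearMap.range M.mulVecLin).subtype
    exact hvind.comp Subtype.val Subtype.val_injective
  have hcard : Fintype.card {i // hM.eigenvalues i ≠ 0}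
      = Module.finrank ℂ (LinearMap.range M.mulVecLin) := by
    rw [← hM.rank_eq_card_non_zero_eigs]
    rfl
  cases isEmpty_or_nonempty {i // hM.eigenvalues i ≠ 0} with
  | inl h =>
    rw [Finset.univ_eq_empty, Finset.prod_empty]
    have h0 : Module.finrank ℂ (LinearMap.range M.mulVecLin) = 0 := by
      rw [← hcard, Fintype.card_eq_zero]
    have hsub : Subsingleton (LinearMap.range M.mulVecLin) :=
      Module.finrank_zero_iff.mp h0
    rw [detPlus]
    have : (M.mulVecLin.restrict
      (p := LinearMap.range M.mulVecLin) (q := LinearMap.range M.mulVecLin)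
      (fun x _ => LinearMap.mem_range_self M.mulVecLin x)) = LinearMap.id := by
      exact LinearMap.ext fun x => Subsingleton.elim _ _
    rw [this, LinearMap.det_id]
  | inr h =>
    set b := basisOfLinearIndependentOfCardEqFinrank hwind hcard with hbdef
    have hb : ⇑b = w := coe_basisOfLinearIndependentOfCardEqFinrank _ _
    rw [detPlus, ← LinearMap.det_toMatrix b]
    have htm : LinearMap.toMatrix b b (M.mulVecLin.restrict
        (p := LinearMap.range M.mulVecLin) (q := LinearMap.range M.mulVecLin)
        (fun x _ => LinearMap.mem_range_self M.mulVecLin x))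
        = diagonal (fun i : {i // hM.eigenvalues i ≠ 0} => ((hM.eigenvalues i.1 : ℝ) : ℂ)) := by
      ext i j
      rw [LinearMap.toMatrix_apply, hb]
      have : (M.mulVecLin.restrict
        (p := LinearMap.range M.mulVecLin) (q := LinearMap.range M.mulVecLin)
        (fun x _ => LinearMap.mem_range_self M.mulVecLin x)) (w j)
          = ((hM.eigenvalues j.1 : ℝ) : ℂ) • w j := by
        apply Subtype.ext
        simp only [LinearMap.restrict_apply, hwdef, SetLike.val_smul]
        exact hmv j.1
      rw [this, ← hb, LinearEquiv.map_smul, b.repr_self]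
      simp only [Finsupp.smul_apply]
      simp [Finsupp.single_apply, diagonal, eq_comm]
      split <;> simp_all
    rw [htm, det_diagonal]

variable {m : Type*} [Fintype m] [DecidableEq m]

theorem det_add_real_smul_one {M : Matrix m m ℂ} (hM : M.IsHermitian) (t : ℝ) :
    (M + (t : ℂ) • 1).det = ((∏ i, (hM.eigenvalues i + t) : ℝ) : ℂ) := by
  have hU : (hM.eigenvectorUnitary : Matrix m m ℂ) * star (hM.eigenvectorUnitary : Matrix m m ℂ)
      = 1 := (Matrix.mem_unitaryGroup_iff).mp (hM.eigenvectorUnitary).2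
  have hU' : star (hM.eigenvectorUnitary : Matrix m m ℂ) * (hM.eigenvectorUnitary : Matrix m m ℂ)
      = 1 := (Matrix.mem_unitaryGroup_iff').mp (hM.eigenvectorUnitary).2
  have hsm : (t : ℂ) • (1 : Matrix m m ℂ) =
      (hM.eigenvectorUnitary : Matrix m m ℂ) * ((t : ℂ) • 1)
        * star (hM.eigenvectorUnitary : Matrix m m ℂ) := by
    rw [Matrix.mul_smul, Matrix.mul_one, Matrix.smul_mul, hU]
  conv_lhs => rw [hM.spectral_theorem, Unitary.conjStarAlgAut_apply, hsm, ← Matrix.add_mul, ← Matrix.mul_add]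
  rw [det_mul, det_mul, mul_comm, ← mul_assoc, ← det_mul, hU', det_one, one_mul]
  rw [smul_one_eq_diagonal, diagonal_add, det_diagonal]
  push_cast
  rfl

theorem psd_det_nonneg {M : Matrix m m ℂ} (hM : M.PosSemidef) : 0 ≤ M.det := by
  rw [hM.1.det_eq_prod_eigenvalues, ← RCLike.ofReal_prod, RCLike.ofReal_nonneg]
  exact Finset.prod_nonneg fun i _ => hM.eigenvalues_nonneg i

open scoped MatrixOrder in
theorem det_le_det_add_of_posSemidef {S T : Matrix m m ℂ}
    (hS : S.PosSemidef) (hT : T.PosSemidef) : S.det ≤ (S + T).det := by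
  by_cases hd : S.det = 0
  · rw [hd]; exact psd_det_nonneg (hS.add hT)
  · set Q := CFC.sqrt S with hQdef
    have hQQ : Q * Q = S := CFC.sqrt_mul_sqrt_self S hS.nonneg
    have hQdet : IsUnit Q.det := by
      rw [isUnit_iff_ne_zero]
      intro h
      apply hd
      rw [← hQQ, det_mul, h, mul_zero]
    have : Invertible Q := Q.invertibleOfIsUnitDet hQdet
    have hQH : Q.IsHermitian := (CFC.sqrt_nonneg S).posSemidef.1
    have hQIH : (Q⁻¹).IsHermitian := hQH.inv
    set W := Q⁻¹ * T * Q⁻¹ with hWdef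
    have hW : W.PosSemidef := by
      have := hT.conjTranspose_mul_mul_same (Q⁻¹)
      rwa [hQIH.eq] at this
    have hdecomp : S + T = Q * (1 + W) * Q := by
      rw [Matrix.mul_add, Matrix.add_mul, Matrix.mul_one, hQQ, hWdef]
      congr 1
      rw [Matrix.mul_assoc, Matrix.mul_assoc, Matrix.inv_mul_of_invertible, Matrix.mul_one,
        Matrix.mul_inv_cancel_left_of_invertible]
    have hdet1W : (1 : ℂ) ≤ (1 + W).det := by
      have h2 := det_add_real_smul_one hW.1 1
      rw [Complex.ofReal_one, one_smul, add_comm] at h2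
      have hr : (1 : ℝ) ≤ ∏ i, (hW.1.eigenvalues i + 1) := by
        calc (1 : ℝ) = ∏ _i : m, (1 : ℝ) := by simp
          _ ≤ ∏ i, (hW.1.eigenvalues i + 1) := by
            refine Finset.prod_le_prod (fun i _ => by norm_num) (fun i _ => ?_)
            have := hW.eigenvalues_nonneg i
            linarith
      rw [h2]
      exact_mod_cast hr
    rw [hdecomp, det_mul, det_mul, mul_comm Q.det, mul_assoc, ← det_mul, hQQ]
    exact le_mul_of_one_le_left (psd_det_nonneg hS) hdet1W

variable {n : Type*} [Fintype n] [DecidableEq n]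

theorem posDef_block₁₁ {A' : Matrix m m ℂ} {B : Matrix m n ℂ} {C' : Matrix n n ℂ}
    (h : (fromBlocks A' B Bᴴ C').PosDef) : A'.PosDef := by
  refine PosDef.of_dotProduct_mulVec_pos (isHermitian_fromBlocks_iff.mp h.1).1 fun x hx => ?_
  have hy : (Sum.elim x 0 : m ⊕ n → ℂ) ≠ 0 := by
    intro hc
    apply hx
    ext i
    exact congrFun hc (Sum.inl i)
  have := h.dotProduct_mulVec_pos hy
  simpa [Function.star_sumElim, fromBlocks_mulVec, sumElim_dotProduct_sumElim] using this

theorem fischer_posDef {A' : Matrix m m ℂ} {B : Matrix m n ℂ} {C' : Matrix n n ℂ}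
    (h : (fromBlocks A' B Bᴴ C').PosDef) :
    (fromBlocks A' B Bᴴ C').det ≤ A'.det * C'.det := by
  have hA : A'.PosDef := posDef_block₁₁ h
  haveI : Invertible A' := A'.invertibleOfIsUnitDet (isUnit_iff_ne_zero.mpr hA.det_pos.ne')
  rw [det_fromBlocks₁₁, invOf_eq_nonsing_inv]
  have hS : (C' - Bᴴ * A'⁻¹ * B).PosSemidef :=
    (PosDef.fromBlocks₁₁ B C' hA).mp h.posSemidef
  have hW : (Bᴴ * A'⁻¹ * B).PosSemidef := (hA.posSemidef.inv).conjTranspose_mul_mul_same B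
  have hle : (C' - Bᴴ * A'⁻¹ * B).det ≤ C'.det := by
    have := det_le_det_add_of_posSemidef hS hW
    rwa [sub_add_cancel] at this
  exact mul_le_mul_of_nonneg_left hle (psd_det_nonneg hA.posSemidef)

theorem prod_add_split {ι : Type*} [Fintype ι] [DecidableEq ι] (lam : ι → ℝ) (t : ℝ) :
    ∏ i, (lam i + t) = (∏ i ∈ univ.filter (fun i => lam i ≠ 0), (lam i + t))
      * t ^ (univ.filter (fun i => lam i = 0)).card := by
  classical
  rw [← Finset.prod_filter_mul_prod_filter_not univ (fun i => lam i ≠ 0)]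
  congr 1
  rw [show (univ.filter fun i => ¬ lam i ≠ 0) = univ.filter (fun i => lam i = 0) by
    apply Finset.filter_congr; intro i _; simp]
  rw [Finset.prod_congr rfl (fun i hi => by
    rw [(Finset.mem_filter.mp hi).2, zero_add]), Finset.prod_const]

theorem generalized_fischer_inequality {k l : ℕ}
    (A : Matrix (Fin k) (Fin k) ℂ) (B : Matrix (Fin k) (Fin l) ℂ)
    (C : Matrix (Fin l) (Fin l) ℂ)
    (hH : (Matrix.fromBlocks A B Bᴴ C).PosSemidef)
    (hrank : (Matrix.fromBlocks A B Bᴴ C).rank = A.rank + C.rank) :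
    detPlus (Matrix.fromBlocks A B Bᴴ C) ≤ detPlus A * detPlus C := by
  classical
  set H := Matrix.fromBlocks A B Bᴴ C with hHdef
  have hA : A.PosSemidef := by
    have h1 := hH.submatrix Sum.inl
    have e : H.submatrix Sum.inl Sum.inl = A := by ext i j; simp [hHdef]
    rwa [e] at h1
  have hC : C.PosSemidef := by
    have h1 := hH.submatrix Sum.inr
    have e : H.submatrix Sum.inr Sum.inr = C := by ext i j; simp [hHdef]
    rwa [e] at h1
  set lH := hH.1.eigenvalues with hlH
  set lA := hA.1.eigenvalues with hlA
  set lC := hC.1.eigenvalues with hlC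
  set dH := (univ.filter (fun i => lH i = 0)).card with hdH
  set dA := (univ.filter (fun i => lA i = 0)).card with hdA
  set dC := (univ.filter (fun i => lC i = 0)).card with hdC
  set gH : ℝ → ℝ := fun t => ∏ i ∈ univ.filter (fun i => lH i ≠ 0), (lH i + t) with hgH
  set gA : ℝ → ℝ := fun t => ∏ i ∈ univ.filter (fun i => lA i ≠ 0), (lA i + t) with hgA
  set gC : ℝ → ℝ := fun t => ∏ i ∈ univ.filter (fun i => lC i ≠ 0), (lC i + t) with hgC
  -- counting
  have hcards : dH = dA + dC := by
    have e1 := Finset.card_filter_add_card_filter_not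
      (s := (univ : Finset (Fin k ⊕ Fin l))) (p := fun i => lH i = 0)
    have e2 := Finset.card_filter_add_card_filter_not
      (s := (univ : Finset (Fin k))) (p := fun i => lA i = 0)
    have e3 := Finset.card_filter_add_card_filter_not
      (s := (univ : Finset (Fin l))) (p := fun i => lC i = 0)
    simp only [Finset.card_univ, Fintype.card_sum, Fintype.card_fin] at e1 e2 e3
    have r1 : H.rank = (univ.filter (fun i => ¬ lH i = 0)).card := by
      rw [hH.1.rank_eq_card_non_zero_eigs, Fintype.card_subtype]
    have r2 : A.rank = (univ.filter (fun i => ¬ lA i = 0)).card := by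
      rw [hA.1.rank_eq_card_non_zero_eigs, Fintype.card_subtype]
    have r3 : C.rank = (univ.filter (fun i => ¬ lC i = 0)).card := by
      rw [hC.1.rank_eq_card_non_zero_eigs, Fintype.card_subtype]
    rw [r1, r2, r3] at hrank
    omega
  -- the inequality for positive ε
  have key : ∀ ε : ℝ, ε ∈ Set.Ioi (0:ℝ) → gH ε ≤ gA ε * gC ε := by
    intro ε hε
    rw [Set.mem_Ioi] at hε
    have hblocks : H + (ε:ℂ) • 1 = fromBlocks (A + (ε:ℂ) • 1) B Bᴴ (C + (ε:ℂ) • 1) := by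
      rw [hHdef]
      ext (i|i) (j|j) <;>
        simp [Matrix.one_apply, Matrix.add_apply, Matrix.smul_apply]
    have hPD : (H + (ε:ℂ) • 1).PosDef := by
      refine Matrix.PosDef.posSemidef_add hH ?_
      rw [smul_one_eq_diagonal]
      exact .diagonal fun i => by exact_mod_cast hε
    rw [hblocks] at hPD
    have hfis := fischer_posDef hPD
    rw [← hblocks] at hfis
    have hAPD : (A + (ε:ℂ) • 1).det = ((∏ i, (lA i + ε) : ℝ) : ℂ) := det_add_real_smul_one hA.1 ε
    rw [det_add_real_smul_one hH.1 ε, hAPD, det_add_real_smul_one hC.1 ε,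
      ← Complex.ofReal_mul, Complex.real_le_real] at hfis
    rw [prod_add_split lH ε, prod_add_split lA ε, prod_add_split lC ε] at hfis
    have hp : (0:ℝ) < ε ^ dH := pow_pos hε _
    refine le_of_mul_le_mul_right ?_ hp
    calc gH ε * ε ^ dH ≤ (gA ε * ε ^ dA) * (gC ε * ε ^ dC) := hfis
      _ = gA ε * gC ε * ε ^ dH := by rw [hcards, pow_add]; ring
  -- limits
  have contH : Continuous gH := by
    apply continuous_finset_prod
    exact fun i _ => (continuous_const.add continuous_id)
  have contA : Continuous gA := by
    apply continuous_finset_prod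
    exact fun i _ => (continuous_const.add continuous_id)
  have contC : Continuous gC := by
    apply continuous_finset_prod
    exact fun i _ => (continuous_const.add continuous_id)
  have tH : Filter.Tendsto gH (nhdsWithin 0 (Set.Ioi 0)) (nhds (gH 0)) :=
    (contH.tendsto 0).mono_left nhdsWithin_le_nhds
  have tAC : Filter.Tendsto (fun t => gA t * gC t) (nhdsWithin 0 (Set.Ioi 0))
      (nhds (gA 0 * gC 0)) :=
    ((contA.mul contC).tendsto 0).mono_left nhdsWithin_le_nhds
  have hlim : gH 0 ≤ gA 0 * gC 0 :=
    le_of_tendsto_of_tendsto tH tAC (eventually_mem_nhdsWithin.mono key)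
  -- assemble
  rw [detPlus_eq_prod hH.1, detPlus_eq_prod hA.1, detPlus_eq_prod hC.1]
  have eH : (∏ i : {i // hH.1.eigenvalues i ≠ 0}, ((hH.1.eigenvalues i.1 : ℝ) : ℂ))
      = ((gH 0 : ℝ) : ℂ) := by
    rw [← Finset.prod_subtype (univ.filter (fun i => lH i ≠ 0)) (fun i => by simp [hlH])
      (fun i => ((lH i : ℝ) : ℂ)), hgH]
    push_cast
    simp
  have eA : (∏ i : {i // hA.1.eigenvalues i ≠ 0}, ((hA.1.eigenvalues i.1 : ℝ) : ℂ))
      = ((gA 0 : ℝ) : ℂ) := by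
    rw [← Finset.prod_subtype (univ.filter (fun i => lA i ≠ 0)) (fun i => by simp [hlA])
      (fun i => ((lA i : ℝ) : ℂ)), hgA]
    push_cast
    simp
  have eC : (∏ i : {i // hC.1.eigenvalues i ≠ 0}, ((hC.1.eigenvalues i.1 : ℝ) : ℂ))
      = ((gC 0 : ℝ) : ℂ) := by
    rw [← Finset.prod_subtype (univ.filter (fun i => lC i ≠ 0)) (fun i => by simp [hlC])
      (fun i => ((lC i : ℝ) : ℂ)), hgC]
    push_cast
    simp
  rw [eH, eA, eC, ← Complex.ofReal_mul, Complex.real_le_real]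
  exact hlim
end

section
/- Equality case of the generalized Fischer inequality: for H = [[A, B], [B*, C]] positive semidefinite Hermitian of maximal rank, det₊ H = det₊ A · det₊ C holds if and only if B = 0. -/
open Matrix ComplexOrder

section bmat
set_option linter.unusedSectionVars false
variable {n ι : Type*} [Fintype n] [Fintype ι] [DecidableEq ι]

/-- matrix whose columns are the basis vectors of a submodule of `n → ℂ` -/
noncomputable def bmat (p : Submodule ℂ (n → ℂ)) (b : Module.Basis ι ℂ p) : Matrix n ι ℂ :=
  Matrix.of fun i j => (b j : n → ℂ) i

lemma bmat_mulVec (p : Submodule ℂ (n → ℂ)) (b : Module.Basis ι ℂ p) (x : ι → ℂ) :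
    bmat p b *ᵥ x = ((∑ j, x j • b j : p) : n → ℂ) := by
  funext i
  simp [bmat, mulVec, dotProduct, mul_comm]

lemma bmat_mulVec_single (p : Submodule ℂ (n → ℂ)) (b : Module.Basis ι ℂ p) (j : ι) :
    bmat p b *ᵥ Pi.single j 1 = (b j : n → ℂ) := by
  funext i
  simp [bmat, mulVec_single]

lemma range_bmat (p : Submodule ℂ (n → ℂ)) (b : Module.Basis ι ℂ p) :
    LinearMap.range (bmat p b).mulVecLin = p := by
  apply le_antisymm
  · rintro _ ⟨x, rfl⟩
    rw [mulVecLin_apply, bmat_mulVec]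
    exact (∑ j, x j • b j).2
  · intro u hu
    exact ⟨b.equivFun ⟨u, hu⟩, by
      rw [mulVecLin_apply, bmat_mulVec, b.sum_equivFun ⟨u, hu⟩]⟩

lemma bmat_mulVec_eq_zero (p : Submodule ℂ (n → ℂ)) (b : Module.Basis ι ℂ p) {x : ι → ℂ}
    (h : bmat p b *ᵥ x = 0) : x = 0 := by
  rw [bmat_mulVec] at h
  have h2 : (∑ j, x j • b j : p) = 0 := Subtype.ext h
  have h3 : b.equivFun.symm x = 0 := by rw [b.equivFun_symm_apply]; exact h2
  have h4 := congrArg b.equivFun h3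
  rwa [b.equivFun.apply_symm_apply, b.equivFun.map_zero] at h4

lemma posDef_bmat (p : Submodule ℂ (n → ℂ)) (b : Module.Basis ι ℂ p) :
    ((bmat p b)ᴴ * bmat p b).PosDef := by
  refine PosDef.of_dotProduct_mulVec_pos (posSemidef_conjTranspose_mul_self (bmat p b)).1 (fun x hx => ?_)
  rw [← mulVec_mulVec, dotProduct_mulVec,
    show star x ᵥ* (bmat p b)ᴴ = star (bmat p b *ᵥ x) from (star_mulVec _ _).symm]
  exact dotProduct_star_self_pos_iff.mpr (fun h0 => hx (bmat_mulVec_eq_zero p b h0))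

lemma matrix_eq_of_mulVec_eq {κ : Type*} [Fintype κ] [DecidableEq κ]
    {A B : Matrix n κ ℂ} (h : ∀ x, A *ᵥ x = B *ᵥ x) : A = B := by
  ext i j
  have := congrFun (h (Pi.single j 1)) i
  simpa [mulVec_single] using this

lemma detPlus_eq_det_of [DecidableEq n] (M : Matrix n n ℂ)
    (b : Module.Basis ι ℂ (LinearMap.range M.mulVecLin)) (N : Matrix ι ι ℂ)
    (hMP : M * bmat _ b = bmat _ b * N) : detPlus M = N.det := by
  rw [detPlus, ← LinearMap.det_toMatrix b]
  congr 1
  ext i j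
  rw [LinearMap.toMatrix_apply]
  have hfb : (M.mulVecLin.restrict
      (p := LinearMap.range M.mulVecLin) (q := LinearMap.range M.mulVecLin)
      (fun x _ => LinearMap.mem_range_self M.mulVecLin x)) (b j)
      = ∑ i, N i j • b i := by
    apply Subtype.ext
    rw [LinearMap.restrict_apply]
    show M *ᵥ (b j : _ → ℂ) = _
    calc M *ᵥ (b j : _ → ℂ) = M *ᵥ (bmat _ b *ᵥ Pi.single j 1) := by rw [bmat_mulVec_single]
      _ = (bmat _ b * N) *ᵥ Pi.single j 1 := by rw [mulVec_mulVec, hMP]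
      _ = bmat _ b *ᵥ (N *ᵥ Pi.single j 1) := by rw [← mulVec_mulVec]
      _ = bmat _ b *ᵥ (fun i => N i j) := by
          funext i'
          simp [mulVec_single]
          rfl
      _ = _ := bmat_mulVec _ b _
  rw [hfb]
  exact congrFun (b.repr_sum_self fun i => N i j) i

lemma mul_bmat_eq (p : Submodule ℂ (n → ℂ)) (b : Module.Basis ι ℂ p) (M : Matrix n n ℂ)
    (hM : ∀ x, M *ᵥ (bmat p b *ᵥ x) ∈ p) :
    M * bmat p b = bmat p b *
      (((bmat p b)ᴴ * bmat p b)⁻¹ * ((bmat p b)ᴴ * (M * bmat p b))) := by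
  set P := bmat p b with hP
  have hPu : IsUnit (Pᴴ * P).det := isUnit_iff_ne_zero.mpr (posDef_bmat p b).det_pos.ne'
  have key : ∀ w, P *ᵥ ((Pᴴ * P)⁻¹ *ᵥ (Pᴴ *ᵥ (P *ᵥ w))) = P *ᵥ w := by
    intro w
    simp only [mulVec_mulVec]
    rw [Matrix.nonsing_inv_mul _ hPu, Matrix.mul_one]
  apply matrix_eq_of_mulVec_eq
  intro x
  obtain ⟨w, hw⟩ := (range_bmat p b).symm ▸ hM x
  rw [mulVecLin_apply] at hw
  rw [← mulVec_mulVec, ← hw]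
  simp only [← mulVec_mulVec]
  rw [← hw]
  exact (key w).symm

end bmat


lemma auxEigenOne {n : Type*} [Fintype n] [DecidableEq n] {M : Matrix n n ℂ}
    (hM : M.PosDef) (hE : (1 - M).PosSemidef) (hdet : M.det = 1) : M = 1 := by
  have hμpos := hM.eigenvalues_pos
  have hμle : ∀ i, hM.1.eigenvalues i ≤ 1 := by
    intro i
    set v := ⇑(hM.1.eigenvectorBasis i) with hv
    have hvne : v ≠ 0 := by
      intro h
      exact hM.1.eigenvectorBasis.orthonormal.ne_zero i (by ext j; exact congrFun h j)
    have hc : 0 < star v ⬝ᵥ v := dotProduct_star_self_pos_iff.mpr hvne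
    have hmv : (1 - M) *ᵥ v = ((1 : ℂ) - (hM.1.eigenvalues i : ℂ)) • v := by
      rw [sub_mulVec, one_mulVec, hM.1.mulVec_eigenvectorBasis, sub_smul, one_smul,
        RCLike.real_smul_eq_coe_smul (K := ℂ)]
      rfl
    have h0 := hE.dotProduct_mulVec_nonneg v
    rw [hmv, dotProduct_smul, smul_eq_mul] at h0
    by_contra hgt
    push_neg at hgt
    have h1 : ((1 : ℂ) - (hM.1.eigenvalues i : ℂ)) * (star v ⬝ᵥ v) < 0 := by
      have hneg : ((1 : ℂ) - (hM.1.eigenvalues i : ℂ)) < 0 := by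
        rw [sub_neg]
        exact_mod_cast hgt
      exact mul_neg_of_neg_of_pos hneg hc
    exact absurd h0 h1.not_ge
  have hμ1 : ∀ i, hM.1.eigenvalues i = 1 := by
    have hprodR : ∏ j, hM.1.eigenvalues j = 1 := by
      have := hM.1.det_eq_prod_eigenvalues
      rw [hdet, ← RCLike.ofReal_prod] at this
      have h' : (RCLike.ofReal (∏ j, hM.1.eigenvalues j) : ℂ) = RCLike.ofReal (1:ℝ) := by
        rw [RCLike.ofReal_one]; exact this.symm
      exact RCLike.ofReal_injective h'
    intro i
    have h2 := Finset.prod_le_one (s := Finset.univ.erase i)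
        (f := hM.1.eigenvalues) (fun j _ => (hμpos j).le) (fun j _ => hμle j)
    have h1 : (1 : ℝ) ≤ hM.1.eigenvalues i := by
      calc (1:ℝ) = ∏ j, hM.1.eigenvalues j := hprodR.symm
        _ = hM.1.eigenvalues i * ∏ j ∈ Finset.univ.erase i, hM.1.eigenvalues j :=
            (Finset.mul_prod_erase _ _ (Finset.mem_univ i)).symm
        _ ≤ hM.1.eigenvalues i * 1 := mul_le_mul_of_nonneg_left h2 (hμpos i).le
        _ = hM.1.eigenvalues i := mul_one _
    exact le_antisymm (hμle i) h1
  have hdiag : diagonal (RCLike.ofReal ∘ hM.1.eigenvalues) = (1 : Matrix n n ℂ) := by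
    have : (RCLike.ofReal ∘ hM.1.eigenvalues : n → ℂ) = fun _ => 1 := by
      funext i
      simp [hμ1 i]
    rw [this]
    simp [← Matrix.diagonal_one]
  calc M = _ := hM.1.spectral_theorem
    _ = 1 := by
        rw [hdiag, Unitary.conjStarAlgAut_apply, mul_one, Matrix.mem_unitaryGroup_iff.mp (hM.1.eigenvectorUnitary).2]



open scoped MatrixOrder in
lemma detSubEq {n : Type*} [Fintype n] [DecidableEq n] {C D : Matrix n n ℂ}
    (hC : C.PosDef) (hD : D.PosSemidef) (hCD : (C - D).PosDef)
    (h : (C - D).det = C.det) : D = 0 := by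
  set R := CFC.sqrt C with hRdef
  have hRps : R.PosSemidef := (CFC.sqrt_nonneg C).posSemidef
  have hRH : R.IsHermitian := hRps.1
  have hRR : R * R = C := CFC.sqrt_mul_sqrt_self C hC.posSemidef.nonneg
  have hRd : R.det ≠ 0 := fun h0 => hC.det_pos.ne' (by rw [← hRR, det_mul, h0, zero_mul])
  have hRdu : IsUnit R.det := isUnit_iff_ne_zero.mpr hRd
  have hRinvH : R⁻¹ᴴ = R⁻¹ := by rw [hRH.inv.eq]
  set M := R⁻¹ * (C - D) * R⁻¹ with hMdef
  have hquad : ∀ x : n → ℂ, star x ⬝ᵥ (M *ᵥ x) = star (R⁻¹ *ᵥ x) ⬝ᵥ ((C - D) *ᵥ (R⁻¹ *ᵥ x)) := by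
    intro x
    rw [hMdef, ← mulVec_mulVec, ← mulVec_mulVec, dotProduct_mulVec,
      show star x ᵥ* R⁻¹ = star (R⁻¹ *ᵥ x) by rw [star_mulVec, hRinvH]]
  have hMpd : M.PosDef := by
    refine PosDef.of_dotProduct_mulVec_pos ?_ ?_
    · show Mᴴ = M
      simp only [hMdef, conjTranspose_mul, hRinvH, hCD.1.eq, Matrix.mul_assoc]
    · intro x hx
      rw [hquad x]
      apply hCD.dotProduct_mulVec_pos
      intro h0
      apply hx
      have : (R * R⁻¹) *ᵥ x = 0 := by rw [← mulVec_mulVec, h0, mulVec_zero]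
      rwa [Matrix.mul_nonsing_inv _ hRdu, one_mulVec] at this
  have h1M : 1 - M = R⁻¹ * D * R⁻¹ := by
    have hCinv : R⁻¹ * C * R⁻¹ = 1 := by
      calc R⁻¹ * C * R⁻¹ = (R⁻¹ * R) * (R * R⁻¹) := by rw [← hRR]; noncomm_ring
        _ = 1 := by rw [Matrix.mul_nonsing_inv _ hRdu, Matrix.nonsing_inv_mul _ hRdu, one_mul]
    rw [hMdef, Matrix.mul_sub, Matrix.sub_mul, hCinv, sub_sub_cancel]
  have hdetM : M.det = 1 := by
    have hCdet : R.det * R.det = C.det := by rw [← det_mul, hRR]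
    have h2 : M.det = R.det⁻¹ * (R.det * R.det) * R.det⁻¹ := by
      rw [hMdef, det_mul, det_mul, det_nonsing_inv]
      simp only [Ring.inverse_eq_inv']
      rw [h, ← hCdet]
    rw [h2]
    field_simp
  have hMeq : M = 1 := by
    apply auxEigenOne hMpd _ hdetM
    rw [h1M]
    have := hD.conjTranspose_mul_mul_same R⁻¹
    rwa [hRinvH] at this
  have h0 : R⁻¹ * D * R⁻¹ = 0 := by rw [← h1M, hMeq, sub_self]
  calc D = (R * R⁻¹) * D * (R⁻¹ * R) := by
        rw [Matrix.mul_nonsing_inv _ hRdu, Matrix.nonsing_inv_mul _ hRdu, one_mul, mul_one]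
    _ = R * (R⁻¹ * D * R⁻¹) * R := by noncomm_ring
    _ = 0 := by rw [h0, mul_zero, zero_mul]



lemma posDef_fromBlocks₁₁' {m n : Type*} [Fintype m] [Fintype n]
    {A : Matrix m m ℂ} {B : Matrix m n ℂ} {C : Matrix n n ℂ}
    (h : (fromBlocks A B Bᴴ C).PosDef) : A.PosDef := by
  refine PosDef.of_dotProduct_mulVec_pos (isHermitian_fromBlocks_iff.mp h.1).1 (fun x hx => ?_)
  have hne : (Sum.elim x (0 : n → ℂ)) ≠ 0 := by
    intro h0
    exact hx (funext fun i => congrFun h0 (Sum.inl i))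
  have := h.dotProduct_mulVec_pos hne
  simpa [fromBlocks_mulVec, Function.star_sumElim, sumElim_dotProduct_sumElim] using this

lemma posDef_fromBlocks₂₂' {m n : Type*} [Fintype m] [Fintype n]
    {A : Matrix m m ℂ} {B : Matrix m n ℂ} {C : Matrix n n ℂ}
    (h : (fromBlocks A B Bᴴ C).PosDef) : C.PosDef := by
  refine PosDef.of_dotProduct_mulVec_pos (isHermitian_fromBlocks_iff.mp h.1).2.2.2 (fun y hy => ?_)
  have hne : (Sum.elim (0 : m → ℂ) y) ≠ 0 := by
    intro h0
    exact hy (funext fun i => congrFun h0 (Sum.inr i))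
  have := h.dotProduct_mulVec_pos hne
  simpa [fromBlocks_mulVec, Function.star_sumElim, sumElim_dotProduct_sumElim] using this

open scoped MatrixOrder in
lemma crux {m n : Type*} [Fintype m] [Fintype n] [DecidableEq m] [DecidableEq n]
    {A : Matrix m m ℂ} {B : Matrix m n ℂ} {C : Matrix n n ℂ}
    (h : (fromBlocks A B Bᴴ C).PosDef) :
    (fromBlocks A B Bᴴ C).det = A.det * C.det ↔ B = 0 := by
  constructor
  · intro hdet
    have hA : A.PosDef := posDef_fromBlocks₁₁' h
    have hC : C.PosDef := posDef_fromBlocks₂₂' h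
    letI := hA.isUnit.invertible
    have hdet2 : (fromBlocks A B Bᴴ C).det = A.det * (C - Bᴴ * A⁻¹ * B).det := by
      rw [det_fromBlocks₁₁, invOf_eq_nonsing_inv]
    have hSdet : (C - Bᴴ * A⁻¹ * B).det = C.det := by
      have := hdet2.symm.trans hdet
      exact mul_left_cancel₀ hA.det_pos.ne' this
    -- Schur complement is positive definite
    have hSpd : (C - Bᴴ * A⁻¹ * B).PosDef := by
      refine PosDef.of_dotProduct_mulVec_pos ((PosDef.fromBlocks₁₁ B C hA).mp h.posSemidef).1 (fun y hy => ?_)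
      have hz : (Sum.elim (-((A⁻¹ * B) *ᵥ y)) y) ≠ 0 := by
        intro h0
        exact hy (funext fun i => congrFun h0 (Sum.inr i))
      have hpos := h.dotProduct_mulVec_pos hz
      have heq := schur_complement_eq₁₁ B C (-((A⁻¹ * B) *ᵥ y)) y hA.1
      rw [dotProduct_mulVec] at hpos
      rw [heq, neg_add_cancel] at hpos
      simpa [dotProduct_mulVec] using hpos
    have hDpsd : (Bᴴ * A⁻¹ * B).PosSemidef := hA.inv.posSemidef.conjTranspose_mul_mul_same B
    have hD0 : Bᴴ * A⁻¹ * B = 0 := detSubEq hC hDpsd hSpd hSdet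
    -- conclude B = 0
    set R := CFC.sqrt A⁻¹ with hR
    have hRps : R.PosSemidef := (CFC.sqrt_nonneg A⁻¹).posSemidef
    have hRR : R * R = A⁻¹ := CFC.sqrt_mul_sqrt_self A⁻¹ hA.inv.posSemidef.nonneg
    have hRd : R.det ≠ 0 := fun h0 => hA.inv.det_pos.ne' (by rw [← hRR, det_mul, h0, zero_mul])
    have hRB : (R * B)ᴴ * (R * B) = 0 := by
      rw [conjTranspose_mul, hRps.1.eq, Matrix.mul_assoc, ← Matrix.mul_assoc R, hRR,
        ← Matrix.mul_assoc]
      exact hD0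
    have hRB0 : R * B = 0 := conjTranspose_mul_self_eq_zero.mp hRB
    have : R⁻¹ * (R * B) = B := by
      rw [← Matrix.mul_assoc, Matrix.nonsing_inv_mul _ (isUnit_iff_ne_zero.mpr hRd), Matrix.one_mul]
    rw [← this, hRB0, Matrix.mul_zero]
  · rintro rfl
    rw [conjTranspose_zero, det_fromBlocks_zero₂₁]


theorem generalized_fischer_equality_iff {k l : ℕ}
    (A : Matrix (Fin k) (Fin k) ℂ) (B : Matrix (Fin k) (Fin l) ℂ)
    (C : Matrix (Fin l) (Fin l) ℂ)
    (hH : (Matrix.fromBlocks A B Bᴴ C).PosSemidef)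
    (hrank : (Matrix.fromBlocks A B Bᴴ C).rank = A.rank + C.rank) :
    detPlus (Matrix.fromBlocks A B Bᴴ C) = detPlus A * detPlus C ↔ B = 0 := by
  classical
  obtain ⟨F, hF⟩ : ∃ F : Matrix (Fin k ⊕ Fin l) (Fin k ⊕ Fin l) ℂ, fromBlocks A B Bᴴ C = Fᴴ * F := by
    open scoped MatrixOrder in
    obtain ⟨F, hF⟩ := CStarAlgebra.nonneg_iff_eq_star_mul_self.mp hH.nonneg
    exact ⟨F, hF⟩
  set K : Matrix (Fin k ⊕ Fin l) (Fin k) ℂ := Matrix.of (fun t j => F t (Sum.inl j)) with hK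
  set L : Matrix (Fin k ⊕ Fin l) (Fin l) ℂ := Matrix.of (fun t j => F t (Sum.inr j)) with hL
  have hA : A = Kᴴ * K := by
    ext i j
    have h : (fromBlocks A B Bᴴ C) (Sum.inl i) (Sum.inl j)
        = (Fᴴ * F) (Sum.inl i) (Sum.inl j) := by rw [hF]
    simpa [mul_apply, conjTranspose_apply, hK] using h
  have hB : B = Kᴴ * L := by
    ext i j
    have h : (fromBlocks A B Bᴴ C) (Sum.inl i) (Sum.inr j)
        = (Fᴴ * F) (Sum.inl i) (Sum.inr j) := by rw [hF]
    simpa [mul_apply, conjTranspose_apply, hK, hL] using h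
  have hC : C = Lᴴ * L := by
    ext i j
    have h : (fromBlocks A B Bᴴ C) (Sum.inr i) (Sum.inr j)
        = (Fᴴ * F) (Sum.inr i) (Sum.inr j) := by rw [hF]
    simpa [mul_apply, conjTranspose_apply, hL] using h
  have hBH : Bᴴ = Lᴴ * K := by
    rw [hB, conjTranspose_mul, conjTranspose_conjTranspose]
  set p := LinearMap.range A.mulVecLin with hp
  set q := LinearMap.range C.mulVecLin with hq
  have hpK : LinearMap.range Kᴴ.mulVecLin = p := by
    have le1 : p ≤ LinearMap.range Kᴴ.mulVecLin := by
      rintro _ ⟨x, rfl⟩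
      exact ⟨K *ᵥ x, by rw [mulVecLin_apply, mulVecLin_apply, mulVec_mulVec, ← hA]⟩
    refine (Submodule.eq_of_le_of_finrank_le le1 ?_).symm
    show Kᴴ.rank ≤ A.rank
    rw [Matrix.rank_conjTranspose, ← Matrix.rank_conjTranspose_mul_self, ← hA]
  have hqL : LinearMap.range Lᴴ.mulVecLin = q := by
    have le1 : q ≤ LinearMap.range Lᴴ.mulVecLin := by
      rintro _ ⟨x, rfl⟩
      exact ⟨L *ᵥ x, by rw [mulVecLin_apply, mulVecLin_apply, mulVec_mulVec, ← hC]⟩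
    refine (Submodule.eq_of_le_of_finrank_le le1 ?_).symm
    show Lᴴ.rank ≤ C.rank
    rw [Matrix.rank_conjTranspose, ← Matrix.rank_conjTranspose_mul_self, ← hC]
  have memB : ∀ v, B *ᵥ v ∈ p := fun v =>
    hpK ▸ ⟨L *ᵥ v, by rw [mulVecLin_apply, mulVec_mulVec, ← hB]⟩
  have memBH : ∀ u, Bᴴ *ᵥ u ∈ q := fun u =>
    hqL ▸ ⟨K *ᵥ u, by rw [mulVecLin_apply, mulVec_mulVec, ← hBH]⟩
  -- stage 5b
  set r := A.rank with hr
  set s := C.rank with hs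
  have hfrp : Module.finrank ℂ ↥p = r := rfl
  have hfrq : Module.finrank ℂ ↥q = s := rfl
  let bp : Module.Basis (Fin r) ℂ ↥p := Module.finBasisOfFinrankEq ℂ ↥p hfrp
  let bq : Module.Basis (Fin s) ℂ ↥q := Module.finBasisOfFinrankEq ℂ ↥q hfrq
  let phi : (↥p × ↥q) →ₗ[ℂ] (Fin k ⊕ Fin l → ℂ) :=
    { toFun := fun w => Sum.elim (w.1 : Fin k → ℂ) (w.2 : Fin l → ℂ)
      map_add' := by intro a b; funext t; cases t <;> simp
      map_smul' := by intro c a; funext t; cases t <;> simp }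
  have hphiinj : Function.Injective phi := by
    intro a b hab
    have h1 : (a.1 : Fin k → ℂ) = b.1 := funext fun i => congrFun hab (Sum.inl i)
    have h2 : (a.2 : Fin l → ℂ) = b.2 := funext fun i => congrFun hab (Sum.inr i)
    exact Prod.ext (Subtype.ext h1) (Subtype.ext h2)
  have hrangephi : LinearMap.range phi
      = LinearMap.range (fromBlocks A B Bᴴ C).mulVecLin := by
    have hle : LinearMap.range (fromBlocks A B Bᴴ C).mulVecLin ≤ LinearMap.range phi := by
      rintro _ ⟨x, rfl⟩
      refine ⟨(⟨_, p.add_mem (⟨x ∘ Sum.inl, rfl⟩ : A *ᵥ (x ∘ Sum.inl) ∈ p) (memB (x ∘ Sum.inr))⟩,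
        ⟨_, q.add_mem (memBH (x ∘ Sum.inl)) (⟨x ∘ Sum.inr, rfl⟩ : C *ᵥ (x ∘ Sum.inr) ∈ q)⟩), ?_⟩
      funext t
      cases t <;> simp [phi, fromBlocks_mulVec]
    refine (Submodule.eq_of_le_of_finrank_le hle ?_).symm
    have e1 : Module.finrank ℂ ↥(LinearMap.range phi) = r + s := by
      rw [LinearMap.finrank_range_of_inj hphiinj, Module.finrank_prod, hfrp, hfrq]
    have e2 : Module.finrank ℂ ↥(LinearMap.range (fromBlocks A B Bᴴ C).mulVecLin)
        = r + s := hrank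
    rw [e1, e2]

  let bH : Module.Basis (Fin r ⊕ Fin s) ℂ ↥(LinearMap.range (fromBlocks A B Bᴴ C).mulVecLin) :=
    ((bp.prod bq).map (LinearEquiv.ofInjective phi hphiinj)).map
      (LinearEquiv.ofEq _ _ hrangephi)
  have hbHl : ∀ j, (bH (Sum.inl j) : (Fin k ⊕ Fin l) → ℂ)
      = Sum.elim (bp j : Fin k → ℂ) 0 := by
    intro j
    show ((LinearEquiv.ofEq _ _ hrangephi) ((LinearEquiv.ofInjective phi hphiinj)
      ((bp.prod bq) (Sum.inl j))) : (Fin k ⊕ Fin l) → ℂ) = _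
    rw [LinearEquiv.coe_ofEq_apply, LinearEquiv.ofInjective_apply]
    show Sum.elim (((bp.prod bq) (Sum.inl j)).1 : Fin k → ℂ)
      (((bp.prod bq) (Sum.inl j)).2 : Fin l → ℂ) = _
    rw [Module.Basis.prod_apply_inl_fst, Module.Basis.prod_apply_inl_snd]
    simp
  have hbHr : ∀ j, (bH (Sum.inr j) : (Fin k ⊕ Fin l) → ℂ)
      = Sum.elim (0 : Fin k → ℂ) (bq j : Fin l → ℂ) := by
    intro j
    show ((LinearEquiv.ofEq _ _ hrangephi) ((LinearEquiv.ofInjective phi hphiinj)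
      ((bp.prod bq) (Sum.inr j))) : (Fin k ⊕ Fin l) → ℂ) = _
    rw [LinearEquiv.coe_ofEq_apply, LinearEquiv.ofInjective_apply]
    show Sum.elim (((bp.prod bq) (Sum.inr j)).1 : Fin k → ℂ)
      (((bp.prod bq) (Sum.inr j)).2 : Fin l → ℂ) = _
    rw [Module.Basis.prod_apply_inr_fst, Module.Basis.prod_apply_inr_snd]
    simp
  -- stage 5c: the W matrix and determinant identities
  set P := bmat p bp with hPdef
  set Q := bmat q bq with hQdef
  set W := bmat (LinearMap.range (fromBlocks A B Bᴴ C).mulVecLin) bH with hWdef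
  have hW : W = fromBlocks P 0 0 Q := by
    ext t j
    cases t <;> cases j <;>
      simp [hWdef, bmat, hbHl, hbHr, hPdef, hQdef, fromBlocks_apply₁₁, fromBlocks_apply₁₂,
        fromBlocks_apply₂₁, fromBlocks_apply₂₂]
  have hPu : ((P)ᴴ * P).det ≠ 0 := (posDef_bmat p bp).det_pos.ne'
  have hQu : ((Q)ᴴ * Q).det ≠ 0 := (posDef_bmat q bq).det_pos.ne'
  have hdetA : detPlus A = (((P)ᴴ * P)⁻¹ * ((P)ᴴ * (A * P))).det :=
    detPlus_eq_det_of A bp _ (mul_bmat_eq p bp A (fun x => LinearMap.mem_range_self _ _))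
  have hdetC : detPlus C = (((Q)ᴴ * Q)⁻¹ * ((Q)ᴴ * (C * Q))).det :=
    detPlus_eq_det_of C bq _ (mul_bmat_eq q bq C (fun x => LinearMap.mem_range_self _ _))
  have hdetH : detPlus (fromBlocks A B Bᴴ C)
      = ((Wᴴ * W)⁻¹ * (Wᴴ * ((fromBlocks A B Bᴴ C) * W))).det :=
    detPlus_eq_det_of _ bH _ (mul_bmat_eq _ bH _ (fun x => LinearMap.mem_range_self _ _))
  set A1 := Pᴴ * (A * P) with hA1def
  set B1 := Pᴴ * (B * Q) with hB1def
  set C1 := Qᴴ * (C * Q) with hC1def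
  have hWW : Wᴴ * W = fromBlocks (Pᴴ * P) 0 0 (Qᴴ * Q) := by
    rw [hW]
    simp [fromBlocks_conjTranspose, fromBlocks_multiply]
  have hG : Wᴴ * ((fromBlocks A B Bᴴ C) * W) = fromBlocks A1 B1 B1ᴴ C1 := by
    have hB1H : B1ᴴ = Qᴴ * (Bᴴ * P) := by
      rw [hB1def]
      simp [conjTranspose_mul, Matrix.mul_assoc]
    rw [hW, hB1H, hA1def, hB1def, hC1def]
    simp [fromBlocks_conjTranspose, fromBlocks_multiply, Matrix.mul_assoc]
  have hGpd : (fromBlocks A1 B1 B1ᴴ C1).PosDef := by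
    rw [← hG]
    refine PosDef.of_dotProduct_mulVec_pos ?_ ?_
    · show (Wᴴ * ((fromBlocks A B Bᴴ C) * W))ᴴ = _
      simp only [conjTranspose_mul, conjTranspose_conjTranspose, hH.1.eq, Matrix.mul_assoc]
    · intro x hx
      have hquad : star x ⬝ᵥ ((Wᴴ * ((fromBlocks A B Bᴴ C) * W)) *ᵥ x)
          = star (W *ᵥ x) ⬝ᵥ ((fromBlocks A B Bᴴ C) *ᵥ (W *ᵥ x)) := by
        simp only [← mulVec_mulVec]
        rw [dotProduct_mulVec, show star x ᵥ* Wᴴ = star (W *ᵥ x) from (star_mulVec _ _).symm]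
      rw [hquad]
      refine lt_of_le_of_ne (hH.dotProduct_mulVec_nonneg _) (fun h0 => hx ?_)
      have h1 : (fromBlocks A B Bᴴ C) *ᵥ (W *ᵥ x) = 0 :=
        (hH.dotProduct_mulVec_zero_iff _).mp h0.symm
      have h2 : W *ᵥ x ∈ LinearMap.range (fromBlocks A B Bᴴ C).mulVecLin := by
        rw [← range_bmat _ bH]
        exact ⟨x, rfl⟩
      obtain ⟨y, hy⟩ := h2
      have h3 : star (W *ᵥ x) ⬝ᵥ (W *ᵥ x) = 0 := by
        have hst : star (W *ᵥ x) = star y ᵥ* (fromBlocks A B Bᴴ C) := by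
          rw [← hy, mulVecLin_apply, star_mulVec, hH.1.eq]
        rw [hst, ← dotProduct_mulVec, h1, dotProduct_zero]
      exact bmat_mulVec_eq_zero _ bH (dotProduct_star_self_eq_zero.mp h3)
  -- determinant chain
  have hdetWW : (Wᴴ * W).det = ((Pᴴ * P).det * (Qᴴ * Q).det) := by
    rw [hWW, det_fromBlocks_zero₂₁]
  have hiff1 : detPlus (fromBlocks A B Bᴴ C) = detPlus A * detPlus C
      ↔ (fromBlocks A1 B1 B1ᴴ C1).det = A1.det * C1.det := by
    have e1 : detPlus (fromBlocks A B Bᴴ C)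
        = ((Pᴴ * P).det * (Qᴴ * Q).det)⁻¹ * (fromBlocks A1 B1 B1ᴴ C1).det := by
      rw [hdetH, det_mul, det_nonsing_inv, Ring.inverse_eq_inv', hdetWW, hG]
    have e2 : detPlus A = (Pᴴ * P).det⁻¹ * A1.det := by
      rw [hdetA, det_mul, det_nonsing_inv, Ring.inverse_eq_inv']
    have e3 : detPlus C = (Qᴴ * Q).det⁻¹ * C1.det := by
      rw [hdetC, det_mul, det_nonsing_inv, Ring.inverse_eq_inv']
    rw [e1, e2, e3, show (Pᴴ * P).det⁻¹ * A1.det * ((Qᴴ * Q).det⁻¹ * C1.det)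
        = ((Pᴴ * P).det * (Qᴴ * Q).det)⁻¹ * (A1.det * C1.det) from by rw [mul_inv]; ring]
    exact mul_right_inj' (inv_ne_zero (mul_ne_zero hPu hQu))
  rw [hiff1, crux hGpd]
  -- B1 = 0 ↔ B = 0
  constructor
  · intro hB1
    -- B * Q = 0
    have hBQ : B * Q = 0 := by
      apply matrix_eq_of_mulVec_eq
      intro x
      have hmem : (B * Q) *ᵥ x ∈ p := by
        rw [← mulVec_mulVec]
        exact memB _
      rw [← range_bmat p bp] at hmem
      obtain ⟨w, hw⟩ := hmem
      rw [mulVecLin_apply] at hw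
      have hPBQ : (Pᴴ * P) *ᵥ w = 0 := by
        have : Pᴴ *ᵥ ((B * Q) *ᵥ x) = 0 := by
          rw [mulVec_mulVec, ← hB1def, hB1, zero_mulVec]
        rw [← hw, mulVec_mulVec] at this
        exact this
      have hw0 : w = 0 := by
        have := congrArg (fun v => (Pᴴ * P)⁻¹ *ᵥ v) hPBQ
        simpa [mulVec_mulVec, Matrix.nonsing_inv_mul _ (isUnit_iff_ne_zero.mpr hPu)] using this
      rw [← hw, hw0, mulVec_zero, zero_mulVec]
    -- B * C = 0
    have hBC : B * C = 0 := by
      apply matrix_eq_of_mulVec_eq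
      intro x
      have hmem : C *ᵥ x ∈ q := LinearMap.mem_range_self _ _
      rw [← range_bmat q bq] at hmem
      obtain ⟨w, hw⟩ := hmem
      rw [mulVecLin_apply] at hw
      rw [← mulVec_mulVec, ← hw, mulVec_mulVec, hBQ, zero_mulVec, zero_mulVec]
    -- algebra: B = 0
    have hCH : C.IsHermitian := by
      rw [hC]; exact (posSemidef_conjTranspose_mul_self L).1
    have hCBH : C * Bᴴ = 0 := by
      have h := congrArg conjTranspose hBC
      rwa [conjTranspose_mul, conjTranspose_zero, hCH.eq] at h
    have h1 : (Lᴴ * L) * (Lᴴ * K) = 0 := by rw [← hC, ← hBH]; exact hCBH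
    have h2 : (L * (Lᴴ * K))ᴴ * (L * (Lᴴ * K)) = 0 := by
      calc (L * (Lᴴ * K))ᴴ * (L * (Lᴴ * K))
          = (Lᴴ * K)ᴴ * ((Lᴴ * L) * (Lᴴ * K)) := by
            simp only [conjTranspose_mul, conjTranspose_conjTranspose, Matrix.mul_assoc]
        _ = 0 := by rw [h1, Matrix.mul_zero]
    have h3 : L * (Lᴴ * K) = 0 := conjTranspose_mul_self_eq_zero.mp h2
    have h4 : (Lᴴ * K)ᴴ * (Lᴴ * K) = 0 := by
      calc (Lᴴ * K)ᴴ * (Lᴴ * K) = Kᴴ * (L * (Lᴴ * K)) := by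
            simp only [conjTranspose_mul, conjTranspose_conjTranspose, Matrix.mul_assoc]
        _ = 0 := by rw [h3, Matrix.mul_zero]
    have h5 : Lᴴ * K = 0 := conjTranspose_mul_self_eq_zero.mp h4
    have h6 : Bᴴ = 0 := by rw [hBH, h5]
    exact conjTranspose_eq_zero.mp h6
  · rintro rfl
    rw [hB1def, Matrix.zero_mul, Matrix.mul_zero]
end

section
/- For H = [[A, B], [B*, C]] positive semidefinite Hermitian of maximal rank, the null space of the generalized Schur complement H/A = C − B* A⁺ B equals the null space of C. -/
open Matrix ComplexOrder

/-- \`Ap\` satisfies the four Penrose equations for \`A\`, i.e. it is the Moore-Penrose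
inverse of \`A\`. -/
def IsMoorePenrose {m n : Type*} [Fintype m] [Fintype n]
    (A : Matrix m n ℂ) (Ap : Matrix n m ℂ) : Prop :=
  A * Ap * A = A ∧ Ap * A * Ap = Ap ∧ (A * Ap)ᴴ = A * Ap ∧ (Ap * A)ᴴ = Ap * A

/-!
Positive semidefiniteness of `H` gives `ker A ⊆ ker Bᴴ` and `ker C ⊆ ker B`. The first inclusion
says that the projector `A A⁺` fixes `B`, so with `Q = A⁺ B` the matrix `H` splits as
`[1; Qᴴ] A [1, Q] + [0; 1] (H/A) [0, 1]`, whence `rank H ≤ rank A + rank (H/A)`, and maximal rank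
forces `rank C ≤ rank (H/A)`. The second inclusion gives `ker C ⊆ ker (H/A)`, which by
rank–nullity is then an equality.
-/

namespace Matrix

variable {K 𝕜 m n : Type*}

section Field

variable [Field K] [Fintype n]

theorem rank_add_le (M N : Matrix m n K) : (M + N).rank ≤ M.rank + N.rank := by
  have hrange : LinearMap.range (M + N).mulVecLin ≤
      LinearMap.range M.mulVecLin ⊔ LinearMap.range N.mulVecLin := by
    rintro _ ⟨x, rfl⟩
    rw [mulVecLin_add]
    exact Submodule.add_mem_sup ⟨x, rfl⟩ ⟨x, rfl⟩
  exact (Submodule.finrank_mono hrange).trans (Submodule.finrank_add_le_finrank_add_finrank _ _)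

theorem rank_mul_mul_le {l p : Type*} [Fintype m] [Fintype p]
    (X : Matrix l m K) (M : Matrix m n K) (Y : Matrix n p K) : (X * M * Y).rank ≤ M.rank :=
  (rank_mul_le_left _ _).trans (rank_mul_le_right _ _)

theorem rank_add_finrank_ker_mulVecLin (M : Matrix m n K) :
    M.rank + Module.finrank K (LinearMap.ker M.mulVecLin) = Fintype.card n := by
  rw [rank, LinearMap.finrank_range_add_finrank_ker, Module.finrank_fintype_fun_eq_card]

theorem ker_mulVecLin_eq_of_le_of_rank_le {M N : Matrix m n K}
    (hker : LinearMap.ker M.mulVecLin ≤ LinearMap.ker N.mulVecLin) (hrank : M.rank ≤ N.rank) :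
    LinearMap.ker N.mulVecLin = LinearMap.ker M.mulVecLin := by
  refine (Submodule.eq_of_le_of_finrank_le hker ?_).symm
  have := M.rank_add_finrank_ker_mulVecLin
  have := N.rank_add_finrank_ker_mulVecLin
  omega

end Field

variable [RCLike 𝕜] [Fintype m]

theorem PosSemidef.ker_mulVecLin_le_ker_conjTranspose_of_fromBlocks [Fintype n]
    {A : Matrix m m 𝕜} {B : Matrix m n 𝕜} {C : Matrix n n 𝕜}
    (hH : (fromBlocks A B Bᴴ C).PosSemidef) :
    LinearMap.ker A.mulVecLin ≤ LinearMap.ker Bᴴ.mulVecLin := by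
  intro x hx
  rw [LinearMap.mem_ker, mulVecLin_apply] at hx ⊢
  have hquad : star (Sum.elim x 0) ⬝ᵥ fromBlocks A B Bᴴ C *ᵥ Sum.elim x 0 = 0 := by
    simp [fromBlocks_mulVec, hx, Function.star_sumElim, sumElim_dotProduct_sumElim]
  ext i
  simpa [fromBlocks_mulVec] using congrFun ((hH.dotProduct_mulVec_zero_iff _).1 hquad) (Sum.inr i)

theorem PosSemidef.ker_mulVecLin_le_ker_of_fromBlocks [Fintype n]
    {A : Matrix m m 𝕜} {B : Matrix m n 𝕜} {C : Matrix n n 𝕜}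
    (hH : (fromBlocks A B Bᴴ C).PosSemidef) :
    LinearMap.ker C.mulVecLin ≤ LinearMap.ker B.mulVecLin := by
  have hswap : (fromBlocks C Bᴴ Bᴴᴴ A).PosSemidef := by
    simpa using hH.submatrix Sum.swap
  simpa using hswap.ker_mulVecLin_le_ker_conjTranspose_of_fromBlocks

theorem IsHermitian.mul_mul_eq_of_ker_le {A Ap : Matrix m m 𝕜} {B : Matrix m n 𝕜}
    (hA : A.IsHermitian) (h₁ : A * Ap * A = A) (h₃ : (A * Ap)ᴴ = A * Ap)
    (hker : LinearMap.ker A.mulVecLin ≤ LinearMap.ker Bᴴ.mulVecLin) :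
    A * Ap * B = B := by
  classical
  have hA_proj : A * (1 - A * Ap) = 0 := by
    have : (1 - A * Ap) * A = 0 := by rw [Matrix.sub_mul, Matrix.one_mul, h₁, sub_self]
    simpa [conjTranspose_sub, h₃, hA.eq] using congrArg (·ᴴ) this
  have hB_proj : Bᴴ * (1 - A * Ap) = 0 := by
    refine ext_iff_mulVec.2 fun v => ?_
    have hv : (1 - A * Ap) *ᵥ v ∈ LinearMap.ker A.mulVecLin := by
      rw [LinearMap.mem_ker, mulVecLin_apply, mulVec_mulVec, hA_proj, zero_mulVec]
    simpa [mulVec_mulVec] using hker hv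
  have : Bᴴ * (A * Ap) = Bᴴ := by
    rw [Matrix.mul_sub, Matrix.mul_one, sub_eq_zero] at hB_proj
    exact hB_proj.symm
  simpa [h₃] using congrArg (·ᴴ) this

theorem IsHermitian.fromBlocks_eq_add_of_mul_eq [Fintype n] [DecidableEq m] [DecidableEq n]
    {A : Matrix m m 𝕜} {B Q : Matrix m n 𝕜}
    (hA : A.IsHermitian) (hAQ : A * Q = B) (C : Matrix n n 𝕜) :
    Matrix.fromBlocks A B Bᴴ C = fromRows 1 Qᴴ * A * fromCols 1 Q +
      fromRows (0 : Matrix m n 𝕜) 1 * (C - Bᴴ * Q) * fromCols (0 : Matrix n m 𝕜) 1 := by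
  have hQA : Qᴴ * A = Bᴴ := by rw [← hA.eq, ← conjTranspose_mul, hAQ]
  rw [fromRows_mul, fromRows_mul_fromCols, fromRows_mul, fromRows_mul_fromCols]
  simp [fromBlocks_add, hAQ, hQA]

end Matrix

theorem ker_schurComplement_eq_ker {k l : ℕ}
    (A : Matrix (Fin k) (Fin k) ℂ) (B : Matrix (Fin k) (Fin l) ℂ)
    (C : Matrix (Fin l) (Fin l) ℂ) (Ap : Matrix (Fin k) (Fin k) ℂ)
    (hAp : IsMoorePenrose A Ap)
    (hH : (Matrix.fromBlocks A B Bᴴ C).PosSemidef)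
    (hrank : (Matrix.fromBlocks A B Bᴴ C).rank = A.rank + C.rank) :
    LinearMap.ker (C - Bᴴ * Ap * B).mulVecLin = LinearMap.ker C.mulVecLin := by
  obtain ⟨hAp₁, -, hAp₃, -⟩ := hAp
  have hA : A.IsHermitian := (isHermitian_fromBlocks_iff.1 hH.isHermitian).1
  have hAApB : A * (Ap * B) = B := by
    rw [← Matrix.mul_assoc]
    exact hA.mul_mul_eq_of_ker_le hAp₁ hAp₃ hH.ker_mulVecLin_le_ker_conjTranspose_of_fromBlocks
  have hker : LinearMap.ker C.mulVecLin ≤ LinearMap.ker (C - Bᴴ * Ap * B).mulVecLin := by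
    intro x hx
    have hBx : B *ᵥ x = 0 := hH.ker_mulVecLin_le_ker_of_fromBlocks hx
    rw [LinearMap.mem_ker, mulVecLin_apply] at hx ⊢
    rw [sub_mulVec, hx, ← mulVec_mulVec, hBx, mulVec_zero, sub_zero]
  have hrankC : C.rank ≤ (C - Bᴴ * Ap * B).rank := by
    have : (Matrix.fromBlocks A B Bᴴ C).rank ≤ A.rank + (C - Bᴴ * Ap * B).rank := by
      rw [hA.fromBlocks_eq_add_of_mul_eq hAApB C, ← Matrix.mul_assoc Bᴴ]
      exact (rank_add_le _ _).trans (add_le_add (rank_mul_mul_le _ _ _) (rank_mul_mul_le _ _ _))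
    omega
  exact ker_mulVecLin_eq_of_le_of_rank_le hker hrankC
end

section
/- Generalized Schur determinant formula: if H = [[A, B], [B*, C]] is positive semidefinite Hermitian of maximal rank, then det₊ H = det₊ A · det₊(H/A), where H/A = C − B* A⁺ B. -/
open Matrix ComplexOrder

/-! ### Auxiliary lemmas -/

section Aux1
variable {F : Type*} [Field F]

/-- det (1 + nilpotent) = 1 for matrices. -/
lemma matrix_det_one_add_of_isNilpotent {n : Type*} [Fintype n] [DecidableEq n]
    (N : Matrix n n F) (hN : IsNilpotent N) : (1 + N).det = 1 := by
  have h1 : IsUnit (charpolyRev (-N)) :=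
    Matrix.isUnit_charpolyRev_of_isNilpotent hN.neg
  obtain ⟨r, hr, hCr⟩ := Polynomial.isUnit_iff.mp h1
  have hr1 : r = 1 := by
    have h0 := Matrix.eval_charpolyRev (M := -N)
    rw [← hCr] at h0; simpa using h0
  have key : Polynomial.eval 1 (charpolyRev (-N)) = 1 := by
    rw [← hCr, hr1]; simp
  rw [charpolyRev, ← Polynomial.coe_evalRingHom, RingHom.map_det] at key
  rw [← key]
  congr 1
  ext i j
  rcases eq_or_ne i j with rfl | hij
  · simp [Matrix.one_apply, Matrix.map_apply]
  · simp [Matrix.one_apply, hij, Matrix.map_apply]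

/-- det (1 + nilpotent) = 1 for endomorphisms of a f.d. space. -/
lemma det_one_add_of_isNilpotent {M : Type*} [AddCommGroup M] [Module F M]
    [FiniteDimensional F M] (φ : Module.End F M) (hφ : IsNilpotent φ) :
    LinearMap.det (1 + φ) = 1 := by
  classical
  let b := Module.finBasis F M
  have hnil : IsNilpotent (LinearMap.toMatrix b b φ) := by
    obtain ⟨m, hm⟩ := hφ
    refine ⟨m, ?_⟩
    have h0 : LinearMap.toMatrix b b (φ ^ m) = 0 := by
      rw [hm]; exact (LinearMap.toMatrix b b).map_zero
    rw [← h0]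
    clear h0 hm
    induction m with
    | zero => simp [pow_zero, LinearMap.toMatrix_one]
    | succ m ih =>
        rw [pow_succ, pow_succ, LinearMap.toMatrix_mul b, ih]
  rw [← LinearMap.det_toMatrix b, map_add, LinearMap.toMatrix_one]
  exact matrix_det_one_add_of_isNilpotent _ hnil

end Aux1

section Aux2
variable {F : Type*} [Field F] {M N : Type*} [AddCommGroup M] [Module F M]
  [AddCommGroup N] [Module F N]

/-- A product of submodules is equivalent to the product of the two submodules. -/
def prodProdEquiv (p : Submodule F M) (q : Submodule F N) :
    ↥(p.prod q) ≃ₗ[F] p × q where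
  toFun x := (⟨x.1.1, x.2.1⟩, ⟨x.1.2, x.2.2⟩)
  map_add' := by intros; rfl
  map_smul' := by intros; rfl
  invFun y := ⟨(y.1.1, y.2.1), ⟨y.1.2, y.2.2⟩⟩
  left_inv := by intro x; rfl
  right_inv := by intro y; rfl

lemma det_prodMap [FiniteDimensional F M] [FiniteDimensional F N]
    (f : Module.End F M) (g : Module.End F N) :
    LinearMap.det (f.prodMap g) = LinearMap.det f * LinearMap.det g := by
  classical
  let b₁ := Module.finBasis F M
  let b₂ := Module.finBasis F N
  rw [← LinearMap.det_toMatrix (b₁.prod b₂), ← LinearMap.det_toMatrix b₁,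
    ← LinearMap.det_toMatrix b₂, LinearMap.toMatrix_prodMap,
    Matrix.det_fromBlocks_zero₂₁]

lemma det_restrict_congr (f : Module.End F M) {V W : Submodule F M} (h : V = W)
    (hV : ∀ x ∈ V, f x ∈ V) (hW : ∀ x ∈ W, f x ∈ W) :
    LinearMap.det (f.restrict hV) = LinearMap.det (f.restrict hW) := by
  subst h; rfl

lemma det_restrict_congr_equiv (f : Module.End F M) (e : M ≃ₗ[F] N)
    (V : Submodule F M) (hf : ∀ x ∈ V, f x ∈ V) {g : Module.End F N}
    (hcomm : ∀ x, g (e x) = e (f x))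
    (hg : ∀ y ∈ V.map (e : M →ₗ[F] N), g y ∈ V.map (e : M →ₗ[F] N)) :
    LinearMap.det (g.restrict hg) = LinearMap.det (f.restrict hf) := by
  let ε : V ≃ₗ[F] V.map (e : M →ₗ[F] N) := e.submoduleMap V
  have key : g.restrict hg =
      (↑ε ∘ₗ (f.restrict hf)) ∘ₗ (↑ε.symm : V.map (e : M →ₗ[F] N) →ₗ[F] V) := by
    ext y
    have h2 : e ((ε.symm y : M)) = (y : N) := by
      have h3 := congrArg (Subtype.val) (ε.apply_symm_apply y)
      simpa [ε, LinearEquiv.submoduleMap_apply] using h3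
    show g ↑y = e (f ↑(ε.symm y))
    rw [← h2, hcomm]
  rw [key, LinearMap.comp_assoc]
  exact LinearMap.det_conj _ ε

lemma det_restrict_prodMap [FiniteDimensional F M] [FiniteDimensional F N]
    (f : Module.End F M) (g : Module.End F N) (p : Submodule F M) (q : Submodule F N)
    (hf : ∀ x ∈ p, f x ∈ p) (hg : ∀ x ∈ q, g x ∈ q)
    (h : ∀ x ∈ p.prod q, (f.prodMap g) x ∈ p.prod q) :
    LinearMap.det ((f.prodMap g).restrict h) =
      LinearMap.det (f.restrict hf) * LinearMap.det (g.restrict hg) := by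
  let ε := prodProdEquiv p q
  have key : (↑ε ∘ₗ ((f.prodMap g).restrict h)) ∘ₗ (↑ε.symm : p × q →ₗ[F] ↥(p.prod q)) =
      (f.restrict hf).prodMap (g.restrict hg) := by
    refine LinearMap.ext fun x => ?_
    refine Prod.ext (Subtype.ext ?_) (Subtype.ext ?_) <;> rfl
  rw [← LinearMap.det_conj ((f.prodMap g).restrict h) ε, ← LinearMap.comp_assoc, key,
    det_prodMap]

end Aux2

section Aux3

lemma IsMoorePenrose.unique {m n : Type*} [Fintype m] [Fintype n]
    {A : Matrix m n ℂ} {P Q : Matrix n m ℂ}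
    (hP : IsMoorePenrose A P) (hQ : IsMoorePenrose A Q) : P = Q := by
  obtain ⟨p1, p2, p3, p4⟩ := hP
  obtain ⟨q1, q2, q3, q4⟩ := hQ
  have e1 : A * P = A * Q := by
    have t1 : (A * Q) * (A * P) = A * P := by
      rw [← Matrix.mul_assoc (A * Q) A P, q1]
    have t2 : (A * P) * (A * Q) = A * Q := by
      rw [← Matrix.mul_assoc (A * P) A Q, p1]
    calc A * P = (A * Q) * (A * P) := t1.symm
    _ = (A * Q)ᴴ * (A * P)ᴴ := by rw [q3, p3]
    _ = ((A * P) * (A * Q))ᴴ := (conjTranspose_mul _ _).symm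
    _ = (A * Q)ᴴ := by rw [t2]
    _ = A * Q := q3
  have e2 : P * A = Q * A := by
    have t1 : (P * A) * (Q * A) = P * A := by
      rw [Matrix.mul_assoc P A (Q * A), ← Matrix.mul_assoc A Q A, q1]
    have t2 : (Q * A) * (P * A) = Q * A := by
      rw [Matrix.mul_assoc Q A (P * A), ← Matrix.mul_assoc A P A, p1]
    calc P * A = (P * A) * (Q * A) := t1.symm
    _ = (P * A)ᴴ * (Q * A)ᴴ := by rw [p4, q4]
    _ = ((Q * A) * (P * A))ᴴ := (conjTranspose_mul _ _).symm
    _ = (Q * A)ᴴ := by rw [t2]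
    _ = Q * A := q4
  calc P = P * A * P := p2.symm
  _ = P * (A * Q) := by rw [Matrix.mul_assoc, e1]
  _ = P * A * Q := by rw [← Matrix.mul_assoc]
  _ = Q * A * Q := by rw [e2]
  _ = Q := q2

lemma IsMoorePenrose.conjTranspose_self {n : Type*} [Fintype n]
    {A Ap : Matrix n n ℂ} (hA : Aᴴ = A) (h : IsMoorePenrose A Ap) : Apᴴ = Ap := by
  obtain ⟨h1, h2, h3, h4⟩ := h
  refine IsMoorePenrose.unique ?_ ⟨h1, h2, h3, h4⟩
  refine ⟨?_, ?_, ?_, ?_⟩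
  · calc A * Apᴴ * A = (Aᴴ * Ap * Aᴴ)ᴴ := by
          simp [conjTranspose_mul, Matrix.mul_assoc]
    _ = (A * Ap * A)ᴴ := by rw [hA]
    _ = Aᴴ := by rw [h1]
    _ = A := hA
  · calc Apᴴ * A * Apᴴ = (Ap * Aᴴ * Ap)ᴴ := by
          simp [conjTranspose_mul, Matrix.mul_assoc]
    _ = (Ap * A * Ap)ᴴ := by rw [hA]
    _ = Apᴴ := by rw [h2]
  · calc (A * Apᴴ)ᴴ = Ap * Aᴴ := by simp [conjTranspose_mul]
    _ = Ap * A := by rw [hA]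
    _ = (Ap * A)ᴴ := h4.symm
    _ = Aᴴ * Apᴴ := by simp [conjTranspose_mul]
    _ = A * Apᴴ := by rw [hA]
  · calc (Apᴴ * A)ᴴ = Aᴴ * Ap := by simp [conjTranspose_mul]
    _ = A * Ap := by rw [hA]
    _ = (A * Ap)ᴴ := h3.symm
    _ = Apᴴ * Aᴴ := by simp [conjTranspose_mul]
    _ = Apᴴ * A := by rw [hA]

end Aux3

section Aux4

noncomputable abbrev eKL (k l : ℕ) :
    ((Fin k ⊕ Fin l) → ℂ) ≃ₗ[ℂ] ((Fin k → ℂ) × (Fin l → ℂ)) :=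
  LinearEquiv.sumArrowLequivProdArrow (Fin k) (Fin l) ℂ ℂ

lemma conj_fromBlocks_apply {k l : ℕ} (P : Matrix (Fin k) (Fin k) ℂ)
    (Q : Matrix (Fin k) (Fin l) ℂ) (R : Matrix (Fin l) (Fin k) ℂ)
    (T : Matrix (Fin l) (Fin l) ℂ) (x : (Fin k → ℂ) × (Fin l → ℂ)) :
    (eKL k l).conj (fromBlocks P Q R T).mulVecLin x
      = (P *ᵥ x.1 + Q *ᵥ x.2, R *ᵥ x.1 + T *ᵥ x.2) := by
  have hsymm : (eKL k l).symm x = Sum.elim x.1 x.2 := by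
    funext i; cases i <;> rfl
  rw [LinearEquiv.conj_apply_apply, hsymm, Matrix.mulVecLin_apply, fromBlocks_mulVec]
  refine Prod.ext ?_ ?_ <;> funext i <;> simp

lemma range_prodMap' {M N M' N' : Type*} [AddCommGroup M] [Module ℂ M]
    [AddCommGroup N] [Module ℂ N] [AddCommGroup M'] [Module ℂ M']
    [AddCommGroup N'] [Module ℂ N'] (f : M →ₗ[ℂ] M') (g : N →ₗ[ℂ] N') :
    LinearMap.range (f.prodMap g) = (LinearMap.range f).prod (LinearMap.range g) := by
  ext x
  constructor
  · rintro ⟨⟨v, w⟩, rfl⟩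
    exact ⟨⟨v, rfl⟩, ⟨w, rfl⟩⟩
  · rintro ⟨⟨v, hv⟩, ⟨w, hw⟩⟩
    exact ⟨(v, w), by simp [Prod.ext_iff, hv, hw]⟩

lemma range_conj_eq_map {M N : Type*} [AddCommGroup M] [Module ℂ M]
    [AddCommGroup N] [Module ℂ N] (φ : Module.End ℂ M) (e : M ≃ₗ[ℂ] N) :
    LinearMap.range (e.conj φ) = (LinearMap.range φ).map (e : M →ₗ[ℂ] N) := by
  ext x
  constructor
  · rintro ⟨y, rfl⟩
    exact ⟨φ (e.symm y), ⟨e.symm y, rfl⟩, rfl⟩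
  · rintro ⟨z, ⟨y, rfl⟩, rfl⟩
    exact ⟨e y, by simp [LinearEquiv.conj_apply_apply]⟩

end Aux4

set_option maxHeartbeats 2000000 in
set_option synthInstance.maxHeartbeats 200000 in
theorem generalized_schur_determinant {k l : ℕ}
    (A : Matrix (Fin k) (Fin k) ℂ) (B : Matrix (Fin k) (Fin l) ℂ)
    (C : Matrix (Fin l) (Fin l) ℂ) (Ap : Matrix (Fin k) (Fin k) ℂ)
    (hAp : IsMoorePenrose A Ap)
    (hH : (Matrix.fromBlocks A B Bᴴ C).PosSemidef)
    (hrank : (Matrix.fromBlocks A B Bᴴ C).rank = A.rank + C.rank) :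
    detPlus (Matrix.fromBlocks A B Bᴴ C) = detPlus A * detPlus (C - Bᴴ * Ap * B) := by
  classical
  obtain ⟨h1, h2, h3, h4⟩ := hAp
  -- Hermitian blocks
  have hHerm : (fromBlocks A B Bᴴ C)ᴴ = fromBlocks A B Bᴴ C := hH.1
  rw [fromBlocks_conjTranspose] at hHerm
  obtain ⟨hA, -, -, hC⟩ := fromBlocks_inj.mp hHerm
  have hApH : Apᴴ = Ap := IsMoorePenrose.conjTranspose_self hA ⟨h1, h2, h3, h4⟩
  have hApA : Ap * A = A * Ap := by
    calc Ap * A = (Ap * A)ᴴ := h4.symm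
    _ = Aᴴ * Apᴴ := conjTranspose_mul _ _
    _ = A * Ap := by rw [hA, hApH]
  -- factor H = Mᴴ * M and extract blocks
  obtain ⟨M, hM⟩ : ∃ M : Matrix (Fin k ⊕ Fin l) (Fin k ⊕ Fin l) ℂ, fromBlocks A B Bᴴ C = Mᴴ * M := by
    open scoped MatrixOrder in
    exact CStarAlgebra.nonneg_iff_eq_star_mul_self.mp hH.nonneg
  have key : ∀ i j, (fromBlocks A B Bᴴ C) i j = ∑ t, star (M t i) * M t j := by
    intro i j; rw [hM]; simp [Matrix.mul_apply, conjTranspose_apply]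
  have hA11 : A = (M.submatrix id Sum.inl)ᴴ * (M.submatrix id Sum.inl) := by
    ext i j
    have h0 := key (Sum.inl i) (Sum.inl j)
    simpa [Matrix.mul_apply, conjTranspose_apply] using h0
  have hB12 : B = (M.submatrix id Sum.inl)ᴴ * (M.submatrix id Sum.inr) := by
    ext i j
    have h0 := key (Sum.inl i) (Sum.inr j)
    simpa [Matrix.mul_apply, conjTranspose_apply] using h0
  have hC22 : C = (M.submatrix id Sum.inr)ᴴ * (M.submatrix id Sum.inr) := by
    ext i j
    have h0 := key (Sum.inr i) (Sum.inr j)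
    simpa [Matrix.mul_apply, conjTranspose_apply] using h0
  have hBH : Bᴴ = (M.submatrix id Sum.inr)ᴴ * (M.submatrix id Sum.inl) := by
    rw [hB12, conjTranspose_mul, conjTranspose_conjTranspose]
  -- A * Ap * B = B
  have hNA : (1 - A * Ap) * A = 0 := by
    rw [Matrix.sub_mul, Matrix.one_mul, h1, sub_self]
  have hNH : (1 - A * Ap)ᴴ = 1 - A * Ap := by
    rw [conjTranspose_sub, conjTranspose_one, h3]
  have hNM : (1 - A * Ap) * (M.submatrix id Sum.inl)ᴴ = 0 := by
    apply Matrix.self_mul_conjTranspose_eq_zero.mp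
    rw [conjTranspose_mul, conjTranspose_conjTranspose, hNH]
    calc (1 - A * Ap) * (M.submatrix id Sum.inl)ᴴ * ((M.submatrix id Sum.inl) * (1 - A * Ap))
        = (1 - A * Ap) * ((M.submatrix id Sum.inl)ᴴ * (M.submatrix id Sum.inl)) * (1 - A * Ap) := by
          rw [Matrix.mul_assoc (1 - A * Ap) _ _, Matrix.mul_assoc _ _ (1 - A * Ap),
            Matrix.mul_assoc]
    _ = (1 - A * Ap) * A * (1 - A * Ap) := by rw [← hA11]
    _ = 0 := by rw [hNA, Matrix.zero_mul]
  have hAApB : A * Ap * B = B := by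
    have h0 : (1 - A * Ap) * B = 0 := by
      rw [hB12, ← Matrix.mul_assoc, hNM, Matrix.zero_mul]
    rw [Matrix.sub_mul, Matrix.one_mul, sub_eq_zero] at h0
    exact h0.symm
  have hBApA : Bᴴ * Ap * A = Bᴴ := by
    have h0 : (Bᴴ * Ap * A)ᴴ = B := by
      rw [conjTranspose_mul, conjTranspose_mul, conjTranspose_conjTranspose, hA, hApH,
        ← Matrix.mul_assoc]
      exact hAApB
    calc Bᴴ * Ap * A = ((Bᴴ * Ap * A)ᴴ)ᴴ := (conjTranspose_conjTranspose _).symm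
    _ = Bᴴ := by rw [h0]
  have hY : Ap * B = A * (Ap * (Ap * B)) := by
    conv_lhs => rw [← h2]
    rw [hApA, Matrix.mul_assoc A Ap Ap, Matrix.mul_assoc A (Ap * Ap) B,
      Matrix.mul_assoc Ap Ap B]
  -- the factorization H = L * D * U
  have hLD : (fromBlocks 1 0 (Bᴴ * Ap) 1 : Matrix (Fin k ⊕ Fin l) (Fin k ⊕ Fin l) ℂ) *
      fromBlocks A 0 0 (C - Bᴴ * Ap * B) = fromBlocks A 0 Bᴴ (C - Bᴴ * Ap * B) := by
    rw [fromBlocks_multiply]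
    simp only [Matrix.one_mul, Matrix.mul_one, Matrix.zero_mul, Matrix.mul_zero,
      add_zero, zero_add]
    rw [hBApA]
  have hfact : fromBlocks A B Bᴴ C =
      (fromBlocks A 0 Bᴴ (C - Bᴴ * Ap * B) : Matrix (Fin k ⊕ Fin l) (Fin k ⊕ Fin l) ℂ) *
        fromBlocks 1 (Ap * B) 0 1 := by
    rw [fromBlocks_multiply]
    simp only [Matrix.one_mul, Matrix.mul_one, Matrix.zero_mul, Matrix.mul_zero,
      add_zero, zero_add]
    have e1 : A * (Ap * B) = B := by rw [← Matrix.mul_assoc]; exact hAApB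
    have e2 : Bᴴ * (Ap * B) + (C - Bᴴ * Ap * B) = C := by
      rw [← Matrix.mul_assoc, add_sub_cancel]
    rw [e1, e2]
  have hHLDU : fromBlocks A B Bᴴ C =
      (fromBlocks 1 0 (Bᴴ * Ap) 1 : Matrix (Fin k ⊕ Fin l) (Fin k ⊕ Fin l) ℂ) *
        (fromBlocks A 0 0 (C - Bᴴ * Ap * B) * fromBlocks 1 (Ap * B) 0 1) := by
    rw [← Matrix.mul_assoc, hLD, ← hfact]
  -- range inclusions
  have hrBC : LinearMap.range (Bᴴ).mulVecLin ≤ LinearMap.range C.mulVecLin := by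
    have hsub1 : LinearMap.range (Bᴴ).mulVecLin ≤
        LinearMap.range ((M.submatrix id Sum.inr)ᴴ).mulVecLin := by
      rw [hBH, Matrix.mulVecLin_mul]
      exact LinearMap.range_comp_le_range _ _
    have hsub2 : LinearMap.range C.mulVecLin ≤
        LinearMap.range ((M.submatrix id Sum.inr)ᴴ).mulVecLin := by
      conv_lhs => rw [hC22]
      rw [Matrix.mulVecLin_mul]
      exact LinearMap.range_comp_le_range _ _
    have hrk : ((M.submatrix id Sum.inr)ᴴ).rank = C.rank := by
      rw [Matrix.rank_conjTranspose,
        ← Matrix.rank_conjTranspose_mul_self (M.submatrix id Sum.inr), ← hC22]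
    have heq : LinearMap.range C.mulVecLin =
        LinearMap.range ((M.submatrix id Sum.inr)ᴴ).mulVecLin :=
      Submodule.eq_of_le_of_finrank_le hsub2 hrk.le
    rw [heq]; exact hsub1
  have hrSC : LinearMap.range (C - Bᴴ * Ap * B).mulVecLin ≤ LinearMap.range C.mulVecLin := by
    rintro x ⟨v, rfl⟩
    have h0 : (C - Bᴴ * Ap * B).mulVecLin v =
        C.mulVecLin v - (Bᴴ).mulVecLin ((Ap * B).mulVecLin v) := by
      simp only [Matrix.mulVecLin_apply, Matrix.sub_mulVec, Matrix.mulVec_mulVec]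
      rw [Matrix.mul_assoc]
    rw [h0]
    exact sub_mem (LinearMap.mem_range_self _ v) (hrBC (LinearMap.mem_range_self _ _))
  -- rank computations
  have hdetL : (fromBlocks 1 0 (Bᴴ * Ap) 1 : Matrix (Fin k ⊕ Fin l) (Fin k ⊕ Fin l) ℂ).det = 1 := by
    rw [Matrix.det_fromBlocks_zero₁₂]; simp
  have hdetU : (fromBlocks 1 (Ap * B) 0 1 : Matrix (Fin k ⊕ Fin l) (Fin k ⊕ Fin l) ℂ).det = 1 := by
    rw [Matrix.det_fromBlocks_zero₂₁]; simp
  have hrankH : (fromBlocks A B Bᴴ C).rank = (fromBlocks A 0 0 (C - Bᴴ * Ap * B)).rank := by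
    rw [hHLDU, Matrix.rank_mul_eq_right_of_isUnit_det _ _ (by rw [hdetL]; exact isUnit_one),
      Matrix.rank_mul_eq_left_of_isUnit_det _ _ (by rw [hdetU]; exact isUnit_one)]
  have hconjD : (eKL k l).conj (fromBlocks A 0 0 (C - Bᴴ * Ap * B)).mulVecLin =
      (A.mulVecLin).prodMap ((C - Bᴴ * Ap * B).mulVecLin) := by
    apply LinearMap.ext; intro x
    rw [conj_fromBlocks_apply]
    simp [Matrix.zero_mulVec, Matrix.mulVecLin_apply, LinearMap.prodMap_apply, Matrix.sub_mulVec,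
      Matrix.mul_assoc]
  have hmapD : (LinearMap.range (fromBlocks A 0 0 (C - Bᴴ * Ap * B)).mulVecLin).map
      ((eKL k l : ((Fin k ⊕ Fin l) → ℂ) →ₗ[ℂ] (Fin k → ℂ) × (Fin l → ℂ))) =
      (LinearMap.range A.mulVecLin).prod (LinearMap.range (C - Bᴴ * Ap * B).mulVecLin) := by
    rw [← range_conj_eq_map, hconjD, range_prodMap']
  have hrankD : (fromBlocks A 0 0 (C - Bᴴ * Ap * B)).rank
      = A.rank + (C - Bᴴ * Ap * B).rank := by
    have e1 : Module.finrank ℂ (LinearMap.range (fromBlocks A 0 0 (C - Bᴴ * Ap * B)).mulVecLin)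
        = Module.finrank ℂ ((LinearMap.range A.mulVecLin).prod
            (LinearMap.range (C - Bᴴ * Ap * B).mulVecLin)) := by
      rw [← hmapD, LinearEquiv.finrank_map_eq]
    have e2 := LinearEquiv.finrank_eq
      (prodProdEquiv (LinearMap.range A.mulVecLin)
        (LinearMap.range (C - Bᴴ * Ap * B).mulVecLin))
    rw [Module.finrank_prod] at e2
    exact e1.trans e2
  have hrkSC : (C - Bᴴ * Ap * B).rank = C.rank := by
    have h0 : A.rank + (C - Bᴴ * Ap * B).rank = A.rank + C.rank := by
      rw [← hrankD, ← hrankH, hrank]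
    exact Nat.add_left_cancel h0
  have hrSCeq : LinearMap.range (C - Bᴴ * Ap * B).mulVecLin = LinearMap.range C.mulVecLin :=
    Submodule.eq_of_le_of_finrank_le hrSC hrkSC.ge
  have hrBS : LinearMap.range (Bᴴ).mulVecLin ≤ LinearMap.range (C - Bᴴ * Ap * B).mulVecLin := by
    rw [hrSCeq]; exact hrBC
  -- membership helpers
  have hXmem : ∀ a ∈ LinearMap.range A.mulVecLin,
      (Bᴴ * Ap) *ᵥ a ∈ LinearMap.range (C - Bᴴ * Ap * B).mulVecLin := by
    rintro _ ⟨u, rfl⟩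
    apply hrBS
    refine ⟨u, ?_⟩
    rw [Matrix.mulVecLin_apply, Matrix.mulVecLin_apply, Matrix.mulVec_mulVec, hBApA]
  have hYmem : ∀ b, (Ap * B) *ᵥ b ∈ LinearMap.range A.mulVecLin := by
    intro b
    refine ⟨(Ap * (Ap * B)) *ᵥ b, ?_⟩
    rw [Matrix.mulVecLin_apply, Matrix.mulVec_mulVec, ← hY]
  set V := (LinearMap.range A.mulVecLin).prod
      (LinearMap.range (C - Bᴴ * Ap * B).mulVecLin) with hVdef
  -- preservation of V by the various maps
  have hlV : ∀ x ∈ V, (eKL k l).conj (fromBlocks 1 0 (Bᴴ * Ap) 1).mulVecLin x ∈ V := by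
    intro x hx
    rw [hVdef, Submodule.mem_prod] at hx
    have hval : (eKL k l).conj (fromBlocks 1 0 (Bᴴ * Ap) 1).mulVecLin x
        = (x.1, (Bᴴ * Ap) *ᵥ x.1 + x.2) := by
      rw [conj_fromBlocks_apply]
      simp [Matrix.one_mulVec, Matrix.zero_mulVec]
    rw [hval, hVdef, Submodule.mem_prod]
    exact ⟨hx.1, add_mem (hXmem _ hx.1) hx.2⟩
  have hl'V : ∀ x ∈ V, (eKL k l).conj (fromBlocks 1 0 (-(Bᴴ * Ap)) 1).mulVecLin x ∈ V := by
    intro x hx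
    rw [hVdef, Submodule.mem_prod] at hx
    have hval : (eKL k l).conj (fromBlocks 1 0 (-(Bᴴ * Ap)) 1).mulVecLin x
        = (x.1, -((Bᴴ * Ap) *ᵥ x.1) + x.2) := by
      rw [conj_fromBlocks_apply]
      simp [Matrix.one_mulVec, Matrix.zero_mulVec, Matrix.neg_mulVec]
    rw [hval, hVdef, Submodule.mem_prod]
    exact ⟨hx.1, add_mem (neg_mem (hXmem _ hx.1)) hx.2⟩
  have huV : ∀ x ∈ V, (eKL k l).conj (fromBlocks 1 (Ap * B) 0 1).mulVecLin x ∈ V := by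
    intro x hx
    rw [hVdef, Submodule.mem_prod] at hx
    have hval : (eKL k l).conj (fromBlocks 1 (Ap * B) 0 1).mulVecLin x
        = (x.1 + (Ap * B) *ᵥ x.2, x.2) := by
      rw [conj_fromBlocks_apply]
      simp [Matrix.one_mulVec, Matrix.zero_mulVec]
    rw [hval, hVdef, Submodule.mem_prod]
    exact ⟨add_mem hx.1 (hYmem _), hx.2⟩
  have hdV : ∀ x ∈ V, ((A.mulVecLin).prodMap ((C - Bᴴ * Ap * B).mulVecLin)) x ∈ V := by
    intro x _
    rw [hVdef, Submodule.mem_prod]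
    exact ⟨LinearMap.mem_range_self _ _, LinearMap.mem_range_self _ _⟩
  -- decomposition of the conjugated map
  have hgdecomp : (eKL k l).conj (fromBlocks A B Bᴴ C).mulVecLin =
      ((eKL k l).conj (fromBlocks 1 0 (Bᴴ * Ap) 1).mulVecLin) ∘ₗ
        (((A.mulVecLin).prodMap ((C - Bᴴ * Ap * B).mulVecLin)) ∘ₗ
          ((eKL k l).conj (fromBlocks 1 (Ap * B) 0 1).mulVecLin)) := by
    rw [← hconjD, ← LinearEquiv.conj_comp, ← LinearEquiv.conj_comp]
    congr 1
    rw [← Matrix.mulVecLin_mul, ← Matrix.mulVecLin_mul, ← hHLDU]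
  -- inverse identities
  have hUU' : (fromBlocks 1 (Ap * B) 0 1 : Matrix (Fin k ⊕ Fin l) (Fin k ⊕ Fin l) ℂ) *
      fromBlocks 1 (-(Ap * B)) 0 1 = 1 := by
    rw [fromBlocks_multiply]
    simp [← fromBlocks_one]
  have hLL' : (fromBlocks 1 0 (Bᴴ * Ap) 1 : Matrix (Fin k ⊕ Fin l) (Fin k ⊕ Fin l) ℂ) *
      fromBlocks 1 0 (-(Bᴴ * Ap)) 1 = 1 := by
    rw [fromBlocks_multiply]
    simp [← fromBlocks_one]
  have hcomp_id : ∀ (P Q : Matrix (Fin k ⊕ Fin l) (Fin k ⊕ Fin l) ℂ), P * Q = 1 →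
      ∀ y, (eKL k l).conj P.mulVecLin ((eKL k l).conj Q.mulVecLin y) = y := by
    intro P Q hPQ y
    have h0 : (eKL k l).conj P.mulVecLin ∘ₗ (eKL k l).conj Q.mulVecLin = LinearMap.id := by
      rw [← LinearEquiv.conj_comp, ← Matrix.mulVecLin_mul, hPQ, Matrix.mulVecLin_one,
        LinearEquiv.conj_id]
    have h1 := LinearMap.ext_iff.mp h0 y
    simpa using h1
  -- the range of H under e equals V
  have hVmapH : (LinearMap.range (fromBlocks A B Bᴴ C).mulVecLin).map
      ((eKL k l : ((Fin k ⊕ Fin l) → ℂ) →ₗ[ℂ] (Fin k → ℂ) × (Fin l → ℂ))) = V := by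
    rw [← range_conj_eq_map, hgdecomp]
    have hsurjU : LinearMap.range ((eKL k l).conj (fromBlocks 1 (Ap * B) 0 1).mulVecLin) = ⊤ := by
      rw [LinearMap.range_eq_top]
      intro y
      exact ⟨(eKL k l).conj (fromBlocks 1 (-(Ap * B)) 0 1).mulVecLin y, hcomp_id _ _ hUU' y⟩
    have hrest : LinearMap.range (((A.mulVecLin).prodMap ((C - Bᴴ * Ap * B).mulVecLin)) ∘ₗ
        ((eKL k l).conj (fromBlocks 1 (Ap * B) 0 1).mulVecLin)) = V := by
      rw [LinearMap.range_comp_of_range_eq_top _ hsurjU, range_prodMap']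
    rw [LinearMap.range_comp, hrest]
    apply le_antisymm
    · rintro _ ⟨x, hx, rfl⟩
      exact hlV x hx
    · intro x hx
      exact ⟨(eKL k l).conj (fromBlocks 1 0 (-(Bᴴ * Ap)) 1).mulVecLin x, hl'V x hx,
        hcomp_id _ _ hLL' x⟩
  have hgV : ∀ x ∈ V, (eKL k l).conj (fromBlocks A B Bᴴ C).mulVecLin x ∈ V := by
    intro x hx
    rw [hgdecomp]
    simp only [LinearMap.comp_apply]
    exact hlV _ (hdV _ (huV x hx))
  -- assembling the determinant
  have hcommH : ∀ x, (eKL k l).conj (fromBlocks A B Bᴴ C).mulVecLin ((eKL k l) x)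
      = (eKL k l) ((fromBlocks A B Bᴴ C).mulVecLin x) := by
    intro x; rw [LinearEquiv.conj_apply_apply, LinearEquiv.symm_apply_apply]
  have hmapmem : ∀ y ∈ (LinearMap.range (fromBlocks A B Bᴴ C).mulVecLin).map
      ((eKL k l : ((Fin k ⊕ Fin l) → ℂ) →ₗ[ℂ] (Fin k → ℂ) × (Fin l → ℂ))),
      (eKL k l).conj (fromBlocks A B Bᴴ C).mulVecLin y ∈
        (LinearMap.range (fromBlocks A B Bᴴ C).mulVecLin).map
          ((eKL k l : ((Fin k ⊕ Fin l) → ℂ) →ₗ[ℂ] (Fin k → ℂ) × (Fin l → ℂ))) := by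
    intro y hy
    rw [hVmapH] at hy ⊢
    exact hgV y hy
  have step1 : detPlus (fromBlocks A B Bᴴ C) =
      LinearMap.det (((eKL k l).conj (fromBlocks A B Bᴴ C).mulVecLin).restrict hmapmem) :=
    (det_restrict_congr_equiv ((fromBlocks A B Bᴴ C).mulVecLin) (eKL k l)
      (LinearMap.range (fromBlocks A B Bᴴ C).mulVecLin)
      (fun x _ => LinearMap.mem_range_self _ x) hcommH hmapmem).symm
  have step2 : LinearMap.det (((eKL k l).conj (fromBlocks A B Bᴴ C).mulVecLin).restrict hmapmem)
      = LinearMap.det (((eKL k l).conj (fromBlocks A B Bᴴ C).mulVecLin).restrict hgV) :=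
    det_restrict_congr _ hVmapH hmapmem hgV
  have hdecompR : ((eKL k l).conj (fromBlocks A B Bᴴ C).mulVecLin).restrict hgV =
      (((eKL k l).conj (fromBlocks 1 0 (Bᴴ * Ap) 1).mulVecLin).restrict hlV) ∘ₗ
      ((((A.mulVecLin).prodMap ((C - Bᴴ * Ap * B).mulVecLin)).restrict hdV) ∘ₗ
       (((eKL k l).conj (fromBlocks 1 (Ap * B) 0 1).mulVecLin).restrict huV)) := by
    apply LinearMap.ext; intro x; apply Subtype.ext
    show (eKL k l).conj (fromBlocks A B Bᴴ C).mulVecLin ↑x = _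
    rw [hgdecomp]; rfl
  -- the three determinants
  have detL : LinearMap.det
      (((eKL k l).conj (fromBlocks 1 0 (Bᴴ * Ap) 1).mulVecLin).restrict hlV) = 1 := by
    have hnmat : (fromBlocks 0 0 (Bᴴ * Ap) 0 : Matrix (Fin k ⊕ Fin l) (Fin k ⊕ Fin l) ℂ) *
        fromBlocks 0 0 (Bᴴ * Ap) 0 = 0 := by
      rw [fromBlocks_multiply]
      simp [← fromBlocks_zero]
    have hnV : ∀ x ∈ V, (eKL k l).conj (fromBlocks 0 0 (Bᴴ * Ap) 0).mulVecLin x ∈ V := by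
      intro x hx
      rw [hVdef, Submodule.mem_prod] at hx
      have hval : (eKL k l).conj (fromBlocks 0 0 (Bᴴ * Ap) 0).mulVecLin x
          = (0, (Bᴴ * Ap) *ᵥ x.1) := by
        rw [conj_fromBlocks_apply]
        simp [Matrix.zero_mulVec]
      rw [hval, hVdef, Submodule.mem_prod]
      exact ⟨zero_mem _, hXmem _ hx.1⟩
    have hsplit : ((eKL k l).conj (fromBlocks 1 0 (Bᴴ * Ap) 1).mulVecLin).restrict hlV =
        1 + ((eKL k l).conj (fromBlocks 0 0 (Bᴴ * Ap) 0).mulVecLin).restrict hnV := by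
      apply LinearMap.ext; intro x; apply Subtype.ext
      show (eKL k l).conj (fromBlocks 1 0 (Bᴴ * Ap) 1).mulVecLin ↑x
          = ↑x + (eKL k l).conj (fromBlocks 0 0 (Bᴴ * Ap) 0).mulVecLin ↑x
      rw [conj_fromBlocks_apply, conj_fromBlocks_apply]
      refine Prod.ext ?_ ?_ <;>
        simp [Matrix.one_mulVec, Matrix.zero_mulVec, add_comm]
    rw [hsplit]
    apply det_one_add_of_isNilpotent
    refine ⟨2, ?_⟩
    have hzero : (eKL k l).conj (fromBlocks 0 0 (Bᴴ * Ap) 0).mulVecLin ∘ₗ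
        (eKL k l).conj (fromBlocks 0 0 (Bᴴ * Ap) 0).mulVecLin = 0 := by
      apply LinearMap.ext; intro y
      rw [LinearMap.comp_apply, conj_fromBlocks_apply, conj_fromBlocks_apply]
      simp
    rw [pow_two, Module.End.mul_eq_comp]
    apply LinearMap.ext; intro x; apply Subtype.ext
    have h1 := LinearMap.ext_iff.mp hzero (↑x : (Fin k → ℂ) × (Fin l → ℂ))
    simp only [LinearMap.comp_apply, LinearMap.zero_apply] at h1
    simpa [LinearMap.restrict_coe_apply] using h1
  have detU : LinearMap.det
      (((eKL k l).conj (fromBlocks 1 (Ap * B) 0 1).mulVecLin).restrict huV) = 1 := by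
    have hnmat : (fromBlocks 0 (Ap * B) 0 0 : Matrix (Fin k ⊕ Fin l) (Fin k ⊕ Fin l) ℂ) *
        fromBlocks 0 (Ap * B) 0 0 = 0 := by
      rw [fromBlocks_multiply]
      simp [← fromBlocks_zero]
    have hnV : ∀ x ∈ V, (eKL k l).conj (fromBlocks 0 (Ap * B) 0 0).mulVecLin x ∈ V := by
      intro x _
      have hval : (eKL k l).conj (fromBlocks 0 (Ap * B) 0 0).mulVecLin x
          = ((Ap * B) *ᵥ x.2, 0) := by
        rw [conj_fromBlocks_apply]
        simp [Matrix.zero_mulVec]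
      rw [hval, hVdef, Submodule.mem_prod]
      exact ⟨hYmem _, zero_mem _⟩
    have hsplit : ((eKL k l).conj (fromBlocks 1 (Ap * B) 0 1).mulVecLin).restrict huV =
        1 + ((eKL k l).conj (fromBlocks 0 (Ap * B) 0 0).mulVecLin).restrict hnV := by
      apply LinearMap.ext; intro x; apply Subtype.ext
      show (eKL k l).conj (fromBlocks 1 (Ap * B) 0 1).mulVecLin ↑x
          = ↑x + (eKL k l).conj (fromBlocks 0 (Ap * B) 0 0).mulVecLin ↑x
      rw [conj_fromBlocks_apply, conj_fromBlocks_apply]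
      refine Prod.ext ?_ ?_ <;>
        simp [Matrix.one_mulVec, Matrix.zero_mulVec, add_comm]
    rw [hsplit]
    apply det_one_add_of_isNilpotent
    refine ⟨2, ?_⟩
    have hzero : (eKL k l).conj (fromBlocks 0 (Ap * B) 0 0).mulVecLin ∘ₗ
        (eKL k l).conj (fromBlocks 0 (Ap * B) 0 0).mulVecLin = 0 := by
      apply LinearMap.ext; intro y
      rw [LinearMap.comp_apply, conj_fromBlocks_apply, conj_fromBlocks_apply]
      simp
    rw [pow_two, Module.End.mul_eq_comp]
    apply LinearMap.ext; intro x; apply Subtype.ext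
    have h1 := LinearMap.ext_iff.mp hzero (↑x : (Fin k → ℂ) × (Fin l → ℂ))
    simp only [LinearMap.comp_apply, LinearMap.zero_apply] at h1
    simpa [LinearMap.restrict_coe_apply] using h1
  have detD : LinearMap.det
      ((((A.mulVecLin).prodMap ((C - Bᴴ * Ap * B).mulVecLin)).restrict hdV)) =
      detPlus A * detPlus (C - Bᴴ * Ap * B) :=
    det_restrict_prodMap (A.mulVecLin) ((C - Bᴴ * Ap * B).mulVecLin) _ _
      (fun x _ => LinearMap.mem_range_self _ x) (fun x _ => LinearMap.mem_range_self _ x) hdV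
  rw [step1, step2, hdecompR, LinearMap.det_comp, LinearMap.det_comp, detL, detU, detD]
  ring
end

section
/- Albert's criterion: for a Hermitian matrix H = [[A, B], [B*, C]], H is positive semidefinite if and only if A is positive semidefinite, the generalized Schur complement H/A = C − B* A⁺ B is positive semidefinite, and R(B) ⊆ R(A). -/
open Matrix ComplexOrder

/-!
If `A * G * B = B` for a generalized inverse `G` of the Hermitian matrix `A` (which says exactly
that `R(B) ⊆ R(A)`), the block matrix is congruent, through the unipotent `[[1, G B], [0, 1]]`, to
`diag(A, C - Bᴴ G B)`; this proves both directions once the range condition holds. The range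
condition is forced by positivity: if `A x = 0` then the quadratic form of `H` vanishes at
`(x, 0)`, so `H (x, 0) = 0` and `Bᴴ x = 0`; and `ker A ⊆ ker Bᴴ` gives `(1 - A A⁺) B = 0`
because `1 - A A⁺` is a Hermitian projection with range in `ker A`.
-/

namespace Matrix

variable {m n p : Type*} [Fintype m] [Fintype n]

theorem range_mulVecLin_le_iff_mul_mul_eq {R : Type*} [CommSemiring R] [Fintype p]
    [DecidableEq p] {A : Matrix m n R} {G : Matrix n m R} (hG : A * G * A = A) (B : Matrix m p R) :
    LinearMap.range B.mulVecLin ≤ LinearMap.range A.mulVecLin ↔ A * G * B = B := by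
  constructor
  · intro h
    refine ext_of_mulVec_single fun j => ?_
    obtain ⟨y, hy⟩ := h ⟨Pi.single j 1, rfl⟩
    simp only [mulVecLin_apply] at hy
    rw [← mulVec_mulVec, ← hy, mulVec_mulVec, hG]
  · rintro hB _ ⟨v, rfl⟩
    refine ⟨(G * B) *ᵥ v, ?_⟩
    simp only [mulVecLin_apply, mulVec_mulVec, ← Matrix.mul_assoc, hB]

theorem mul_mul_eq_of_ker_conjTranspose_le {R : Type*} [CommRing R] [StarRing R]
    [DecidableEq m] [Fintype p] {A : Matrix m n R} {G : Matrix n m R} (hG : A * G * A = A)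
    (hAG : (A * G)ᴴ = A * G) {B : Matrix m p R}
    (hker : LinearMap.ker Aᴴ.mulVecLin ≤ LinearMap.ker Bᴴ.mulVecLin) :
    A * G * B = B := by
  have hA : Aᴴ * (1 - A * G) = 0 := by
    rw [Matrix.mul_sub, Matrix.mul_one, ← hAG, ← conjTranspose_mul, hG, sub_self]
  have hB : Bᴴ * (1 - A * G) = 0 := by
    refine ext_of_mulVec_single fun j => ?_
    rw [← mulVec_mulVec, zero_mulVec]
    exact hker (by rw [LinearMap.mem_ker, mulVecLin_apply, mulVec_mulVec, hA, zero_mulVec])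
  have := congrArg conjTranspose hB
  rw [conjTranspose_mul, conjTranspose_sub, conjTranspose_one, hAG, conjTranspose_conjTranspose,
    Matrix.sub_mul, Matrix.one_mul, conjTranspose_zero, sub_eq_zero] at this
  exact this.symm

theorem PosSemidef.ker_mulVecLin_le_ker_conjTranspose {𝕜 : Type*} [RCLike 𝕜]
    {A : Matrix m m 𝕜} {B : Matrix m n 𝕜} {C : Matrix n n 𝕜}
    (hH : (fromBlocks A B Bᴴ C).PosSemidef) :
    LinearMap.ker A.mulVecLin ≤ LinearMap.ker Bᴴ.mulVecLin := by
  intro x hx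
  simp only [LinearMap.mem_ker, mulVecLin_apply] at hx ⊢
  have hquad : star (Sum.elim x 0) ⬝ᵥ fromBlocks A B Bᴴ C *ᵥ Sum.elim x 0 = 0 := by
    simp [fromBlocks_mulVec, Function.star_sumElim, hx]
  have hH0 := (hH.dotProduct_mulVec_zero_iff _).1 hquad
  rw [fromBlocks_mulVec] at hH0
  simpa [hx] using congrArg (· ∘ Sum.inr) hH0

theorem fromBlocks_eq_conjTranspose_mul_fromBlocks_zero_mul {R : Type*} [CommRing R] [StarRing R]
    [DecidableEq m] [DecidableEq n] {A G : Matrix m m R} {B : Matrix m n R}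
    (C : Matrix n n R) (hA : A.IsHermitian) (hB : A * G * B = B) :
    fromBlocks A B Bᴴ C = (fromBlocks 1 (G * B) 0 1)ᴴ * fromBlocks A 0 0 (C - Bᴴ * G * B) *
      fromBlocks 1 (G * B) 0 1 := by
  have hB' : Bᴴ * Gᴴ * A = Bᴴ := by
    simpa [conjTranspose_mul, hA.eq, Matrix.mul_assoc] using congrArg conjTranspose hB
  simp only [fromBlocks_conjTranspose, fromBlocks_multiply, conjTranspose_mul, conjTranspose_one,
    conjTranspose_zero, Matrix.one_mul, Matrix.mul_one, Matrix.zero_mul, Matrix.mul_zero,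
    add_zero, zero_add, ← Matrix.mul_assoc, hB, hB', add_sub_cancel]

theorem posSemidef_fromBlocks_zero_iff {R : Type*} [CommRing R] [PartialOrder R] [StarRing R]
    [StarOrderedRing R] {A : Matrix m m R} {D : Matrix n n R} :
    (fromBlocks A 0 0 D).PosSemidef ↔ A.PosSemidef ∧ D.PosSemidef := by
  refine ⟨fun h => ⟨h.submatrix Sum.inl, h.submatrix Sum.inr⟩, fun ⟨hA, hD⟩ => ?_⟩
  refine .of_dotProduct_mulVec_nonneg ?_ fun x => ?_
  · exact (isHermitian_fromBlocks_iff).2 ⟨hA.1, by simp, by simp, hD.1⟩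
  · rw [← Sum.elim_comp_inl_inr x, fromBlocks_mulVec, Function.star_sumElim,
      sumElim_dotProduct_sumElim]
    simpa using add_nonneg (hA.dotProduct_mulVec_nonneg _) (hD.dotProduct_mulVec_nonneg _)

theorem posSemidef_fromBlocks_iff_of_mul_mul_eq {R : Type*} [CommRing R] [PartialOrder R]
    [StarRing R] [StarOrderedRing R] [DecidableEq m] [DecidableEq n] {A G : Matrix m m R}
    {B : Matrix m n R} (C : Matrix n n R) (hA : A.IsHermitian) (hB : A * G * B = B) :
    (fromBlocks A B Bᴴ C).PosSemidef ↔ A.PosSemidef ∧ (C - Bᴴ * G * B).PosSemidef := by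
  have hU : IsUnit (fromBlocks 1 (G * B) 0 1 : Matrix (m ⊕ n) (m ⊕ n) R) := by simp
  rw [fromBlocks_eq_conjTranspose_mul_fromBlocks_zero_mul C hA hB, ← star_eq_conjTranspose,
    hU.posSemidef_star_left_conjugate_iff, posSemidef_fromBlocks_zero_iff]

end Matrix

theorem albert_criterion_general {k l : ℕ}
    (A : Matrix (Fin k) (Fin k) ℂ) (B : Matrix (Fin k) (Fin l) ℂ)
    (C : Matrix (Fin l) (Fin l) ℂ) (Ap : Matrix (Fin k) (Fin k) ℂ)
    (hA : A.IsHermitian)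
    (hAp : IsMoorePenrose A Ap) :
    (Matrix.fromBlocks A B Bᴴ C).PosSemidef ↔
      A.PosSemidef ∧ (C - Bᴴ * Ap * B).PosSemidef ∧
        LinearMap.range B.mulVecLin ≤ LinearMap.range A.mulVecLin := by
  obtain ⟨hApA, -, hAAp, -⟩ := hAp
  rw [range_mulVecLin_le_iff_mul_mul_eq hApA]
  refine ⟨fun hH => ?_, fun ⟨hA₀, hS, hB⟩ =>
    (posSemidef_fromBlocks_iff_of_mul_mul_eq C hA hB).2 ⟨hA₀, hS⟩⟩
  have hB : A * Ap * B = B := mul_mul_eq_of_ker_conjTranspose_le hApA hAAp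
    (by rw [hA.eq]; exact hH.ker_mulVecLin_le_ker_conjTranspose)
  exact and_assoc.1 ⟨(posSemidef_fromBlocks_iff_of_mul_mul_eq C hA hB).1 hH, hB⟩

theorem albert_criterion {k l : ℕ}
    (A : Matrix (Fin k) (Fin k) ℂ) (B : Matrix (Fin k) (Fin l) ℂ)
    (C : Matrix (Fin l) (Fin l) ℂ) (Ap : Matrix (Fin k) (Fin k) ℂ)
    (hA : A.IsHermitian) (hC : C.IsHermitian)
    (hAp : IsMoorePenrose A Ap) :
    (Matrix.fromBlocks A B Bᴴ C).PosSemidef ↔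
      A.PosSemidef ∧ (C - Bᴴ * Ap * B).PosSemidef ∧
        LinearMap.range B.mulVecLin ≤ LinearMap.range A.mulVecLin :=
  albert_criterion_general A B C Ap hA hAp
end

section
/- Block matrix completion: let H be the 3x3 block Hermitian matrix [[A, B, X], [B*, C, D], [X*, D*, E]]. If the principal submatrices [[A, B], [B*, C]] and [[C, D], [D*, E]] are positive semidefinite, then choosing X = B C⁺ D makes H positive semidefinite. -/
open Matrix ComplexOrder

/-- The 3×3 block matrix \`[[A, B, X], [Bᴴ, C, D], [Xᴴ, Dᴴ, E]]\`. -/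
def threeBlock {a b c : ℕ} (A : Matrix (Fin a) (Fin a) ℂ) (B : Matrix (Fin a) (Fin b) ℂ)
    (C : Matrix (Fin b) (Fin b) ℂ) (D : Matrix (Fin b) (Fin c) ℂ)
    (E : Matrix (Fin c) (Fin c) ℂ) (X : Matrix (Fin a) (Fin c) ℂ) :
    Matrix (Fin a ⊕ (Fin b ⊕ Fin c)) (Fin a ⊕ (Fin b ⊕ Fin c)) ℂ :=
  Matrix.fromBlocks A (Matrix.fromCols B X) (Matrix.fromRows Bᴴ Xᴴ)
    (Matrix.fromBlocks C D Dᴴ E)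

/-- If `Fᴴ * (Pᴴ * P) * F = 0` then `P * F = 0`. -/
lemma aux_mul_eq_zero {m n : Type*} [Fintype m] [Fintype n]
    (P : Matrix m n ℂ) (F : Matrix n n ℂ) (h : Fᴴ * (Pᴴ * P) * F = 0) : P * F = 0 := by
  apply Matrix.conjTranspose_mul_self_eq_zero.mp
  rw [Matrix.conjTranspose_mul]
  calc (Fᴴ * Pᴴ) * (P * F) = Fᴴ * (Pᴴ * P) * F := by
        simp only [Matrix.mul_assoc]
    _ = 0 := h


lemma fromRows_add' {R : Type*} [AddCommMonoid R] {m₁ m₂ n : Type*}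
    (A₁ : Matrix m₁ n R) (A₂ : Matrix m₂ n R) (B₁ : Matrix m₁ n R) (B₂ : Matrix m₂ n R) :
    Matrix.fromRows A₁ A₂ + Matrix.fromRows B₁ B₂ = Matrix.fromRows (A₁ + B₁) (A₂ + B₂) := by
  ext (i | i) j <;> simp [Matrix.fromRows_apply_inl, Matrix.fromRows_apply_inr]

lemma fromCols_zero_fromRows {R : Type*} [Zero R] {m₁ m₂ n₁ n₂ : Type*}
    (A : Matrix m₁ n₂ R) (B : Matrix m₂ n₂ R) :
    Matrix.fromCols (0 : Matrix (m₁ ⊕ m₂) n₁ R) (Matrix.fromRows A B) =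
      Matrix.fromBlocks 0 A 0 B := by
  ext (i | i) (j | j) <;> simp [Matrix.fromCols, Matrix.fromRows_apply_inl, Matrix.fromRows_apply_inr, Matrix.fromBlocks]

lemma posSemidef_eq_conjTranspose_mul_self' {n : Type*} [Fintype n] {M : Matrix n n ℂ}
    (hM : M.PosSemidef) : ∃ N : Matrix n n ℂ, M = Nᴴ * N := by
  classical
  open MatrixOrder in
  exact ⟨CFC.sqrt M, by
    rw [show (CFC.sqrt M)ᴴ = CFC.sqrt M from (CFC.sqrt_nonneg M).posSemidef.isHermitian,
      CFC.sqrt_mul_sqrt_self M hM.nonneg]⟩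

theorem completion_posSemidef {a b c : ℕ}
    (A : Matrix (Fin a) (Fin a) ℂ) (B : Matrix (Fin a) (Fin b) ℂ)
    (C : Matrix (Fin b) (Fin b) ℂ) (D : Matrix (Fin b) (Fin c) ℂ)
    (E : Matrix (Fin c) (Fin c) ℂ) (Cp : Matrix (Fin b) (Fin b) ℂ)
    (hCp : IsMoorePenrose C Cp)
    (hα : (Matrix.fromBlocks A B Bᴴ C).PosSemidef)
    (hβ : (Matrix.fromBlocks C D Dᴴ E).PosSemidef) :
    (threeBlock A B C D E (B * Cp * D)).PosSemidef := by
  obtain ⟨h1, h2, h3, h4⟩ := hCp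
  -- factor the two PSD matrices
  obtain ⟨N, hN⟩ := posSemidef_eq_conjTranspose_mul_self' hα
  obtain ⟨P, hP⟩ := posSemidef_eq_conjTranspose_mul_self' hβ
  set N₁ := N.toCols₁ with hN₁
  set N₂ := N.toCols₂ with hN₂
  set P₁ := P.toCols₁ with hP₁
  set P₂ := P.toCols₂ with hP₂
  have hNblocks : Matrix.fromBlocks A B Bᴴ C =
      Matrix.fromBlocks (N₁ᴴ * N₁) (N₁ᴴ * N₂) (N₂ᴴ * N₁) (N₂ᴴ * N₂) := by
    rw [hN, ← Matrix.fromCols_toCols N,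
      Matrix.conjTranspose_fromCols_eq_fromRows_conjTranspose,
      Matrix.fromRows_mul_fromCols]
  have hPblocks : Matrix.fromBlocks C D Dᴴ E =
      Matrix.fromBlocks (P₁ᴴ * P₁) (P₁ᴴ * P₂) (P₂ᴴ * P₁) (P₂ᴴ * P₂) := by
    rw [hP, ← Matrix.fromCols_toCols P,
      Matrix.conjTranspose_fromCols_eq_fromRows_conjTranspose,
      Matrix.fromRows_mul_fromCols]
  have hB : B = N₁ᴴ * N₂ := ((Matrix.fromBlocks_inj.mp hNblocks).2.1)
  have hCN : C = N₂ᴴ * N₂ := ((Matrix.fromBlocks_inj.mp hNblocks).2.2.2)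
  have hCP : C = P₁ᴴ * P₁ := ((Matrix.fromBlocks_inj.mp hPblocks).1)
  have hD : D = P₁ᴴ * P₂ := ((Matrix.fromBlocks_inj.mp hPblocks).2.1)
  have hCherm : Cᴴ = C := by rw [hCP]; simp [Matrix.conjTranspose_mul]
  -- N₂ * Cp * C = N₂
  have hN₂ : N₂ * (Cp * C) = N₂ := by
    have h0 : N₂ * (Cp * C - 1) = 0 := by
      apply aux_mul_eq_zero
      rw [← hCN]
      have : C * (Cp * C - 1) = 0 := by
        rw [Matrix.mul_sub, Matrix.mul_one, ← Matrix.mul_assoc, h1, sub_self]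
      calc (Cp * C - 1)ᴴ * C * (Cp * C - 1)
          = (Cp * C - 1)ᴴ * (C * (Cp * C - 1)) := by rw [Matrix.mul_assoc]
        _ = 0 := by rw [this, Matrix.mul_zero]
    have := sub_eq_zero.mp (by rwa [Matrix.mul_sub, Matrix.mul_one] at h0)
    exact this
  -- P₁ * C * Cp = P₁
  have hP₁C : P₁ * (C * Cp) = P₁ := by
    have h0 : P₁ * (C * Cp - 1) = 0 := by
      apply aux_mul_eq_zero
      rw [← hCP]
      have : (C * Cp - 1)ᴴ * C = 0 := by
        rw [Matrix.conjTranspose_sub, h3, Matrix.conjTranspose_one, Matrix.sub_mul,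
          Matrix.one_mul, h1, sub_self]
      rw [this, Matrix.zero_mul]
    have := sub_eq_zero.mp (by rwa [Matrix.mul_sub, Matrix.mul_one] at h0)
    exact this
  -- key identities
  have keyB : B * Cp * C = B := by
    rw [hB, show N₁ᴴ * N₂ * Cp * C = N₁ᴴ * (N₂ * (Cp * C)) by simp only [Matrix.mul_assoc], hN₂]
  have keyD : C * Cp * D = D := by
    have hc : C * Cp * P₁ᴴ = P₁ᴴ := by
      have h' := congrArg Matrix.conjTranspose hP₁C
      rw [Matrix.conjTranspose_mul, h3] at h'
      exact h'
    rw [hD, ← Matrix.mul_assoc, hc]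
  have hq : Dᴴ * (Cpᴴ * C) = Dᴴ := by
    have h' := congrArg Matrix.conjTranspose keyD
    rw [Matrix.conjTranspose_mul, Matrix.conjTranspose_mul, hCherm, ← Matrix.mul_assoc] at h'
    rw [Matrix.mul_assoc] at h'
    exact h'
  have keyE : Dᴴ * Cpᴴ * D = Dᴴ * Cp * D := by
    calc Dᴴ * Cpᴴ * D = Dᴴ * Cpᴴ * (C * Cp * D) := by rw [keyD]
      _ = Dᴴ * (Cpᴴ * C) * (Cp * D) := by simp only [Matrix.mul_assoc]
      _ = Dᴴ * (Cp * D) := by rw [hq]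
      _ = Dᴴ * Cp * D := by rw [Matrix.mul_assoc]
  -- the two rectangular factors
  set L1 : Matrix (Fin a ⊕ Fin b) (Fin a ⊕ (Fin b ⊕ Fin c)) ℂ :=
    Matrix.fromBlocks 1 (Matrix.fromCols 0 0) 0 (Matrix.fromCols 1 (Cp * D)) with hL1
  set L2 : Matrix (Fin b ⊕ Fin c) (Fin a ⊕ (Fin b ⊕ Fin c)) ℂ :=
    Matrix.fromBlocks 0 (Matrix.fromCols 0 (-(Cp * D))) 0 (Matrix.fromCols 0 1) with hL2
  have key : threeBlock A B C D E (B * Cp * D) =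
      L1ᴴ * (Matrix.fromBlocks A B Bᴴ C) * L1 +
      L2ᴴ * (Matrix.fromBlocks C D Dᴴ E) * L2 := by
    rw [hL1, hL2]
    rw [Matrix.fromBlocks_conjTranspose, Matrix.fromBlocks_conjTranspose]
    simp only [Matrix.conjTranspose_fromCols_eq_fromRows_conjTranspose,
      Matrix.conjTranspose_zero, Matrix.conjTranspose_one,
      Matrix.fromBlocks_multiply, Matrix.mul_fromCols, Matrix.fromRows_mul,
      Matrix.fromRows_mul_fromCols, Matrix.mul_zero, Matrix.zero_mul,
      Matrix.mul_one, Matrix.one_mul, Matrix.mul_neg, Matrix.neg_mul,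
      Matrix.conjTranspose_neg, add_zero, zero_add, neg_zero,
      Matrix.fromBlocks_add, Matrix.fromRows_zero, Matrix.fromCols_zero,
      fromRows_add', fromCols_zero_fromRows, Matrix.fromRows_neg, Matrix.fromCols_neg,
      Matrix.fromCols_fromRows_eq_fromBlocks, Matrix.neg_mul, neg_neg, neg_add_rev]
    have f1 : (Cp * D)ᴴ * C = Dᴴ := by
      rw [Matrix.conjTranspose_mul, Matrix.mul_assoc]; exact hq
    have f2 : (Cp * D)ᴴ * D = Dᴴ * (Cp * D) := by
      rw [Matrix.conjTranspose_mul]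
      rw [show Dᴴ * Cpᴴ * D = Dᴴ * Cp * D from keyE, Matrix.mul_assoc]
    have f3 : C * (Cp * D) = D := by rw [← Matrix.mul_assoc]; exact keyD
    rw [threeBlock, Matrix.fromBlocks_inj]
    refine ⟨rfl, ?_, ?_, ?_⟩
    · rw [Matrix.fromCols_ext_iff]
      exact ⟨rfl, Matrix.mul_assoc _ _ _⟩
    · rw [Matrix.fromRows_ext_iff]
      refine ⟨rfl, ?_⟩
      rw [Matrix.mul_assoc, Matrix.conjTranspose_mul]
    · rw [Matrix.fromBlocks_inj]
      refine ⟨rfl, f3.symm, f1.symm, ?_⟩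
      rw [f1, f2]
      simp only [neg_add_cancel, Matrix.zero_mul, neg_zero, zero_add]
      abel
  rw [key]
  exact (hα.conjTranspose_mul_mul_same L1).add (hβ.conjTranspose_mul_mul_same L2)
end
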